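/- arXiv:2605.19886 — 10 statements merged into one kernel-verified Lean document; each statement's English description precedes it below -/
import Mathlib

section
/- Let (S,E,I,R) be a classical solution of the 1D SEIR reaction–diffusion system on [0,T]×[0,L] with λ > 0. If the initial data are nonnegative, i.e. S(0,x) ≥ 0, E(0,x) ≥ 0, I(0,x) ≥ 0 and R(0,x) ≥ 0 for all x ∈ [0,L], then S(t,x) ≥ 0, E(t,x) ≥ 0, I(t,x) ≥ 0 and R(t,x) ≥ 0 for all (t,x) ∈ [0,T]×[0,L]. -/
/-!
Add to every component the barrier `ε e^{Kt} cosh (x - L/2)`. It is positive, solves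
`∂ₜφ - λ∂ₓₓφ = (K - λ)φ`, and its slope points outward at both ends of `[0, L]`. At the first
time some perturbed component reaches zero, the Neumann condition therefore puts the touching
point in the interior, where the heat operator of the perturbed component is `≤ 0`, i.e.
`uₜ - λuₓₓ ≤ -(K - λ)εφ`. The reaction terms are quasi-positive: a component sitting at the
common lower level `-c` has reaction `≥ -C c`, with `C` depending only on the coefficients and a
bound for `S` and `I`. Taking `K > λ + C` gives a contradiction, and `ε → 0` yields the claim.
-/

open Set Filter Topology

theorem HasDerivWithinAt.nonneg_of_isMinOn_Icc_left {f : ℝ → ℝ} {a b d : ℝ} (hab : a < b)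
    (hf : HasDerivWithinAt f d (Icc a b) a) (hmin : IsMinOn f (Icc a b) a) : 0 ≤ d := by
  have hcone : b - a ∈ posTangentConeAt (Icc a b) a :=
    sub_mem_posTangentConeAt_of_segment_subset (segment_eq_Icc hab.le).subset
  have := hmin.localize.hasFDerivWithinAt_nonneg hf.hasFDerivWithinAt hcone
  rw [ContinuousLinearMap.toSpanSingleton_apply, smul_eq_mul] at this
  exact nonneg_of_mul_nonneg_right this (sub_pos.2 hab)

theorem HasDerivWithinAt.nonpos_of_isMinOn_Icc_right {f : ℝ → ℝ} {a b d : ℝ} (hab : a < b)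
    (hf : HasDerivWithinAt f d (Icc a b) b) (hmin : IsMinOn f (Icc a b) b) : d ≤ 0 := by
  have hcone : a - b ∈ posTangentConeAt (Icc a b) b :=
    sub_mem_posTangentConeAt_of_segment_subset (by rw [segment_symm, segment_eq_Icc hab.le])
  have := hmin.localize.hasFDerivWithinAt_nonneg hf.hasFDerivWithinAt hcone
  rw [ContinuousLinearMap.toSpanSingleton_apply, smul_eq_mul] at this
  exact nonpos_of_mul_nonneg_right this (sub_neg.2 hab)

theorem IsLocalMin.nonneg_of_hasDerivAt_deriv {g g' : ℝ → ℝ} {x₀ c : ℝ} (hmin : IsLocalMin g x₀)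
    (hg : ∀ᶠ x in 𝓝 x₀, HasDerivAt g (g' x) x) (hg' : HasDerivAt g' c x₀) : 0 ≤ c := by
  have hg'₀ : g' x₀ = 0 := hmin.hasDerivAt_eq_zero hg.self_of_nhds
  -- If `c < 0`, then `g' < 0` just right of `x₀`, and the mean value theorem makes `g` drop there.
  by_contra! hc
  have hslope : ∀ᶠ x in 𝓝[>] x₀, slope g' x₀ x < 0 :=
    ((hasDerivAt_iff_tendsto_slope.1 hg').mono_left (nhdsGT_le_nhdsNE x₀)).eventually
      (eventually_lt_nhds hc)
  have hright : ∀ᶠ x in 𝓝[>] x₀, g x₀ ≤ g x ∧ HasDerivAt g (g' x) x ∧ g' x < 0 := by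
    filter_upwards [nhdsWithin_le_nhds hmin, nhdsWithin_le_nhds hg, hslope, self_mem_nhdsWithin]
      with x hmin hder hs (hx : x₀ < x)
    rw [slope_def_field, hg'₀, sub_zero, div_neg_iff] at hs
    exact ⟨hmin, hder, by rcases hs with h | h <;> [linarith [h.2]; exact h.1]⟩
  obtain ⟨u, hu : x₀ < u, hsub⟩ := mem_nhdsGT_iff_exists_Ioo_subset.1 hright
  obtain ⟨x, hx⟩ := nonempty_Ioo.2 hu
  have hcont : ContinuousOn g (Icc x₀ x) := by
    intro y hy
    rcases hy.1.eq_or_lt with rfl | hy₁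
    · exact hg.self_of_nhds.continuousAt.continuousWithinAt
    · exact (hsub ⟨hy₁, hy.2.trans_lt hx.2⟩).2.1.continuousAt.continuousWithinAt
  obtain ⟨ξ, hξ, hξeq⟩ := exists_hasDerivAt_eq_slope g g' hx.1 hcont
    fun y hy => (hsub ⟨hy.1, hy.2.trans hx.2⟩).2.1
  have hξneg := (hsub ⟨hξ.1, hξ.2.trans hx.2⟩).2.2
  have : 0 ≤ (g x - g x₀) / (x - x₀) :=
    div_nonneg (sub_nonneg.2 (hsub hx).1) (sub_nonneg.2 hx.1.le)
  linarith

theorem IsMinOn.mem_Ioo_of_hasDerivWithinAt {f : ℝ → ℝ} {a b x₀ da db : ℝ} (hab : a < b)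
    (hmin : IsMinOn f (Icc a b) x₀) (hx₀ : x₀ ∈ Icc a b)
    (ha : HasDerivWithinAt f da (Icc a b) a) (hda : da < 0)
    (hb : HasDerivWithinAt f db (Icc a b) b) (hdb : 0 < db) : x₀ ∈ Ioo a b := by
  refine ⟨hx₀.1.lt_of_ne ?_, hx₀.2.lt_of_ne ?_⟩
  · rintro rfl
    exact hda.not_ge (ha.nonneg_of_isMinOn_Icc_left hab hmin)
  · rintro rfl
    exact hdb.not_ge (hb.nonpos_of_isMinOn_Icc_right hab hmin)

theorem heat_nonpos_of_isMinOn {w : ℝ → ℝ → ℝ} {wx : ℝ → ℝ} {a t₀ x₀ wt wxx lam : ℝ}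
    (hlam : 0 ≤ lam) (ha : a < t₀)
    (hwt : HasDerivAt (fun τ => w τ x₀) wt t₀) (hwx : ∀ᶠ x in 𝓝 x₀, HasDerivAt (w t₀) (wx x) x)
    (hwxx : HasDerivAt wx wxx x₀) (htime : IsMinOn (fun τ => w τ x₀) (Icc a t₀) t₀)
    (hspace : IsLocalMin (w t₀) x₀) : wt - lam * wxx ≤ 0 := by
  have ht := hwt.hasDerivWithinAt.nonpos_of_isMinOn_Icc_right ha htime
  have hx := hspace.nonneg_of_hasDerivAt_deriv hwx hwxx
  linarith [mul_nonneg hlam hx]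

noncomputable def expCoshBarrier (K L t x : ℝ) : ℝ := Real.exp (K * t) * Real.cosh (x - L / 2)

theorem expCoshBarrier_pos (K L t x : ℝ) : 0 < expCoshBarrier K L t x :=
  mul_pos (Real.exp_pos _) (Real.cosh_pos _)

theorem continuous_expCoshBarrier (K L : ℝ) :
    Continuous fun q : ℝ × ℝ => expCoshBarrier K L q.1 q.2 := by
  unfold expCoshBarrier; fun_prop

theorem hasDerivAt_expCoshBarrier_time (K L t x : ℝ) :
    HasDerivAt (fun τ => expCoshBarrier K L τ x) (K * expCoshBarrier K L t x) t := by
  have := (((hasDerivAt_id t).const_mul K).exp).mul_const (Real.cosh (x - L / 2))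
  simpa [expCoshBarrier, mul_comm, mul_assoc, mul_left_comm] using this

theorem hasDerivAt_expCoshBarrier_space (K L t x : ℝ) :
    HasDerivAt (expCoshBarrier K L t) (Real.exp (K * t) * Real.sinh (x - L / 2)) x := by
  unfold expCoshBarrier
  simpa using (((hasDerivAt_id x).sub_const (L / 2)).cosh).const_mul (Real.exp (K * t))

theorem hasDerivAt_exp_mul_sinh (K L t x : ℝ) :
    HasDerivAt (fun y => Real.exp (K * t) * Real.sinh (y - L / 2)) (expCoshBarrier K L t x) x := by
  unfold expCoshBarrier
  simpa using (((hasDerivAt_id x).sub_const (L / 2)).sinh).const_mul (Real.exp (K * t))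

theorem mem_Ioo_and_heat_le_of_touch_expCoshBarrier {u : ℝ → ℝ → ℝ} {ut ux uxx : ℝ → ℝ}
    {L lam K ε t₀ x₀ : ℝ} (hL : 0 < L) (hlam : 0 ≤ lam) (hε : 0 < ε) (ht₀ : 0 < t₀)
    (hut : ∀ x ∈ Ioo 0 L, HasDerivAt (fun τ => u τ x) (ut x) t₀)
    (hux : ∀ x ∈ Icc 0 L, HasDerivWithinAt (u t₀) (ux x) (Icc 0 L) x)
    (huxx : ∀ x ∈ Ioo 0 L, HasDerivAt ux (uxx x) x) (hbc : ux 0 = 0 ∧ ux L = 0)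
    (hnonneg : ∀ t ∈ Icc 0 t₀, ∀ x ∈ Icc 0 L, 0 ≤ u t x + ε * expCoshBarrier K L t x)
    (hx₀ : x₀ ∈ Icc 0 L) (hzero : u t₀ x₀ + ε * expCoshBarrier K L t₀ x₀ = 0) :
    x₀ ∈ Ioo 0 L ∧ ut x₀ - lam * uxx x₀ ≤ ε * (lam - K) * expCoshBarrier K L t₀ x₀ := by
  set w : ℝ → ℝ → ℝ := fun t x => u t x + ε * expCoshBarrier K L t x
  set wx : ℝ → ℝ := fun x => ux x + ε * (Real.exp (K * t₀) * Real.sinh (x - L / 2))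
  have hwx : ∀ x ∈ Icc 0 L, HasDerivWithinAt (w t₀) (wx x) (Icc 0 L) x := fun x hx =>
    (hux x hx).add (((hasDerivAt_expCoshBarrier_space K L t₀ x).const_mul ε).hasDerivWithinAt)
  have hspace : IsMinOn (w t₀) (Icc 0 L) x₀ := fun x hx => by
    simpa [w, hzero] using hnonneg t₀ ⟨ht₀.le, le_rfl⟩ x hx
  have htime : IsMinOn (fun τ => w τ x₀) (Icc 0 t₀) t₀ := fun t ht => by
    simpa [w, hzero] using hnonneg t ht x₀ hx₀
  -- By the Neumann condition, the slope of `w` at the ends is that of the barrier.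
  have hbarrier : 0 < ε * (Real.exp (K * t₀) * Real.sinh (L / 2)) :=
    mul_pos hε (mul_pos (Real.exp_pos _) (Real.sinh_pos_iff.2 (half_pos hL)))
  have hx₀' : x₀ ∈ Ioo 0 L := hspace.mem_Ioo_of_hasDerivWithinAt hL hx₀
    (hwx 0 ⟨le_rfl, hL.le⟩) (by simp only [wx, hbc.1, zero_sub, Real.sinh_neg]; linarith)
    (hwx L ⟨hL.le, le_rfl⟩) (by simp only [wx, hbc.2, sub_half]; linarith)
  refine ⟨hx₀', ?_⟩
  have hwx' : ∀ᶠ x in 𝓝 x₀, HasDerivAt (w t₀) (wx x) x := by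
    filter_upwards [Ioo_mem_nhds hx₀'.1 hx₀'.2] with x hx
    exact (hwx x (Ioo_subset_Icc_self hx)).hasDerivAt (Icc_mem_nhds hx.1 hx.2)
  have hheat := heat_nonpos_of_isMinOn (w := w) hlam ht₀
    ((hut x₀ hx₀').add ((hasDerivAt_expCoshBarrier_time K L t₀ x₀).const_mul ε)) hwx'
    ((huxx x₀ hx₀').add ((hasDerivAt_exp_mul_sinh K L t₀ x₀).const_mul ε)) htime
    (hspace.isLocalMin (Icc_mem_nhds hx₀'.1 hx₀'.2))
  linarith

theorem forall_nonneg_of_no_first_zero {ι X : Type*} [Finite ι] [TopologicalSpace X]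
    [T2Space X] {s : Set X} {T : ℝ} {g : ι → ℝ → X → ℝ} (hs : IsCompact s)
    (hg : ∀ i, ContinuousOn (fun q : ℝ × X => g i q.1 q.2) (Icc 0 T ×ˢ s))
    (h₀ : ∀ i, ∀ x ∈ s, 0 < g i 0 x)
    (hfirst : ∀ i, ∀ t ∈ Ioc 0 T, ∀ x ∈ s,
      (∀ j, ∀ τ ∈ Icc 0 t, ∀ y ∈ s, 0 ≤ g j τ y) → g i t x ≠ 0) :
    ∀ i, ∀ t ∈ Icc 0 T, ∀ x ∈ s, 0 ≤ g i t x := by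
  by_contra! hneg
  obtain ⟨i₁, t₁, ht₁, x₁, hx₁, hneg₁⟩ := hneg
  have hQ : IsCompact (Icc 0 T ×ˢ s) := isCompact_Icc.prod hs
  set B := ⋃ i, Icc 0 T ×ˢ s ∩ (fun q : ℝ × X => g i q.1 q.2) ⁻¹' Iic 0
  have hB : IsCompact B := isCompact_iUnion fun i => hQ.of_isClosed_subset
    ((hg i).preimage_isClosed_of_isClosed hQ.isClosed isClosed_Iic) inter_subset_left
  obtain ⟨⟨t₀, x₀⟩, hq₀, hmin⟩ := hB.exists_isMinOn
    ⟨(t₁, x₁), mem_iUnion.2 ⟨i₁, ⟨ht₁, hx₁⟩, hneg₁.le⟩⟩ continuous_fst.continuousOn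
  obtain ⟨i₀, ⟨ht₀, hx₀⟩, hle⟩ := mem_iUnion.1 hq₀
  have hbefore : ∀ j, ∀ τ ∈ Icc 0 T, τ < t₀ → ∀ y ∈ s, 0 < g j τ y := by
    intro j τ hτ hτt y hy
    by_contra! h
    exact hτt.not_ge (hmin (mem_iUnion.2 ⟨j, ⟨hτ, hy⟩, (h : (τ, y) ∈ _)⟩) :)
  have ht₀pos : 0 < t₀ := ht₀.1.lt_of_ne fun h => (h₀ i₀ x₀ hx₀).not_ge (h ▸ hle)
  have hat : ∀ j, ∀ y ∈ s, 0 ≤ g j t₀ y := by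
    intro j y hy
    have hcont : ContinuousOn (fun τ => g j τ y) (Icc 0 T) :=
      (hg j).comp (by fun_prop : Continuous fun τ : ℝ => (τ, y)).continuousOn fun τ hτ => ⟨hτ, hy⟩
    have hlim := ((hcont t₀ ht₀).mono
      fun τ (hτ : τ ∈ Ico 0 t₀) => ⟨hτ.1, hτ.2.le.trans ht₀.2⟩).tendsto
    rw [nhdsWithin_Ico_eq_nhdsLT ht₀pos] at hlim
    refine ge_of_tendsto hlim ?_
    filter_upwards [Ioo_mem_nhdsLT ht₀pos] with τ hτ
    exact (hbefore j τ ⟨hτ.1.le, hτ.2.le.trans ht₀.2⟩ hτ.2 y hy).le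
  have hupto : ∀ j, ∀ τ ∈ Icc 0 t₀, ∀ y ∈ s, 0 ≤ g j τ y := by
    intro j τ hτ y hy
    rcases hτ.2.lt_or_eq with hlt | heq
    · exact (hbefore j τ ⟨hτ.1, hlt.le.trans ht₀.2⟩ hlt y hy).le
    · exact heq ▸ hat j y hy
  exact hfirst i₀ t₀ ⟨ht₀pos, ht₀.2⟩ x₀ hx₀ hupto (le_antisymm hle (hat i₀ x₀ hx₀))

theorem nonneg_of_quasipositive {ι : Type*} [Finite ι] {T L lam C : ℝ}
    {u ut ux uxx : ι → ℝ → ℝ → ℝ} (hL : 0 < L) (hlam : 0 ≤ lam)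
    (hcont : ∀ i, ContinuousOn (fun q : ℝ × ℝ => u i q.1 q.2) (Icc 0 T ×ˢ Icc 0 L))
    (hut : ∀ i, ∀ t ∈ Ioc 0 T, ∀ x ∈ Ioo 0 L, HasDerivAt (fun τ => u i τ x) (ut i t x) t)
    (hux : ∀ i, ∀ t ∈ Ioc 0 T, ∀ x ∈ Icc 0 L,
      HasDerivWithinAt (fun y => u i t y) (ux i t x) (Icc 0 L) x)
    (huxx : ∀ i, ∀ t ∈ Ioc 0 T, ∀ x ∈ Ioo 0 L, HasDerivAt (fun y => ux i t y) (uxx i t x) x)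
    (hbc : ∀ i, ∀ t ∈ Ioc 0 T, ux i t 0 = 0 ∧ ux i t L = 0)
    (hqp : ∀ t ∈ Ioc 0 T, ∀ x ∈ Ioo 0 L, ∀ c > 0, ∀ i, (∀ j, -c ≤ u j t x) → u i t x = -c →
      -(C * c) ≤ ut i t x - lam * uxx i t x)
    (h₀ : ∀ i, ∀ x ∈ Icc 0 L, 0 ≤ u i 0 x) :
    ∀ i, ∀ t ∈ Icc 0 T, ∀ x ∈ Icc 0 L, 0 ≤ u i t x := by
  -- `K > lam + C` lets the barrier's defect `(K - lam) εφ` beat the reaction bound `C εφ`.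
  set K := lam + C + 1
  have hpert : ∀ ε > 0, ∀ i, ∀ t ∈ Icc 0 T, ∀ x ∈ Icc 0 L,
      0 ≤ u i t x + ε * expCoshBarrier K L t x := by
    intro ε hε
    refine forall_nonneg_of_no_first_zero isCompact_Icc
      (fun i => (hcont i).add
        (continuousOn_const.mul (continuous_expCoshBarrier K L).continuousOn))
      (fun i x hx => add_pos_of_nonneg_of_pos (h₀ i x hx)
        (mul_pos hε (expCoshBarrier_pos K L 0 x))) ?_
    intro i t ht x hx hnonneg hzero
    obtain ⟨hx', hheat⟩ := mem_Ioo_and_heat_le_of_touch_expCoshBarrier hL hlam hε ht.1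
      (hut i t ht) (hux i t ht) (huxx i t ht) (hbc i t ht) (hnonneg i) hx hzero
    have hc := mul_pos hε (expCoshBarrier_pos K L t x)
    have := hqp t ht x hx' _ hc i
      (fun j => by linarith [hnonneg j t ⟨ht.1.le, le_rfl⟩ x hx]) (by linarith)
    have hK : ε * (lam - K) * expCoshBarrier K L t x =
        -(C * (ε * expCoshBarrier K L t x)) - ε * expCoshBarrier K L t x := by ring
    linarith
  intro i t ht x hx
  have hb := expCoshBarrier_pos K L t x
  refine le_of_forall_pos_le_add fun δ hδ => ?_
  have := hpert (δ / expCoshBarrier K L t x) (div_pos hδ hb) i t ht x hx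
  rwa [div_mul_cancel₀ _ hb.ne'] at this

theorem neg_mul_le_mul_of_mem_Icc {a b c M : ℝ} (hc : 0 ≤ c) (hM : 0 ≤ M)
    (ha : a ∈ Icc (-c) M) (hb : b ∈ Icc (-c) M) : -(c * M) ≤ a * b := by
  obtain ⟨ha₁, ha₂⟩ := ha
  obtain ⟨hb₁, hb₂⟩ := hb
  rcases le_total 0 a with h | h <;> rcases le_total 0 b with h' | h' <;> nlinarith

/-- The components are indexed `S, E, I, R ↦ 0, 1, 2, 3`. -/
def seirReaction (Λ μ β p δ η γ : ℝ) (v : Fin 4 → ℝ) : Fin 4 → ℝ :=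
  ![Λ - β * v 0 * v 2 - μ * v 0,
    β * p * v 0 * v 2 - (δ + η + μ) * v 1,
    β * (1 - p) * v 0 * v 2 + δ * v 1 - (γ + μ) * v 2,
    η * v 1 + γ * v 2 - μ * v 3]

theorem seirReaction_quasipositive {Λ μ β p δ η γ M c : ℝ} {v : Fin 4 → ℝ} {i : Fin 4}
    (hΛ : 0 ≤ Λ) (hμ : 0 ≤ μ) (hβ : 0 ≤ β) (hp0 : 0 ≤ p) (hp1 : p ≤ 1)
    (hδ : 0 ≤ δ) (hη : 0 ≤ η) (hγ : 0 ≤ γ) (hS : |v 0| ≤ M) (hI : |v 2| ≤ M) (hc : 0 ≤ c)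
    (hv : ∀ j, -c ≤ v j) (hvi : v i = -c) :
    -((β * M + δ + η + γ) * c) ≤ seirReaction Λ μ β p δ η γ v i := by
  have hM : 0 ≤ M := (abs_nonneg _).trans hS
  have hSI : -(c * M) ≤ v 0 * v 2 := neg_mul_le_mul_of_mem_Icc hc hM
    ⟨hv 0, (abs_le.1 hS).2⟩ ⟨hv 2, (abs_le.1 hI).2⟩
  have hβc : 0 ≤ β * c := mul_nonneg hβ hc
  have hβcM : 0 ≤ β * c * M := mul_nonneg hβc hM
  have hδc := mul_nonneg hδ hc
  have hηc := mul_nonneg hη hc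
  have hγc := mul_nonneg hγ hc
  have hμc := mul_nonneg hμ hc
  fin_cases i <;> dsimp [seirReaction] at hvi ⊢ <;> simp only [hvi] at hSI ⊢
  · linarith [mul_le_mul_of_nonneg_left (abs_le.1 hI).1 hβc]
  · linarith [mul_le_mul_of_nonneg_left hSI (mul_nonneg hβ hp0), mul_le_of_le_one_left hβcM hp1]
  · linarith [mul_le_mul_of_nonneg_left hSI (mul_nonneg hβ (sub_nonneg.2 hp1)),
      mul_le_of_le_one_left hβcM (sub_le_self 1 hp0), mul_le_mul_of_nonneg_left (hv 1) hδ]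
  · linarith [mul_le_mul_of_nonneg_left (hv 1) hη, mul_le_mul_of_nonneg_left (hv 2) hγ]

theorem seir_classical_solution_nonneg_general
    (Λ μ β p δ η γ lam T L : ℝ)
    (hΛ : 0 ≤ Λ) (hμ : 0 < μ) (hβ : 0 ≤ β) (hp0 : 0 ≤ p) (hp1 : p ≤ 1)
    (hδ : 0 ≤ δ) (hη : 0 ≤ η) (hγ : 0 ≤ γ) (hlam : 0 < lam)
    (hL : 0 < L)
    (S E I R : ℝ → ℝ → ℝ)
    -- partial derivatives: in time (·t), first (·x) and second (·xx) in space
    (St Et It Rt Sx Ex Ix Rx Sxx Exx Ixx Rxx : ℝ → ℝ → ℝ)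
    -- continuity on the closed space-time cylinder [0,T] × [0,L]
    (hScont : ContinuousOn (fun q : ℝ × ℝ => S q.1 q.2) (Set.Icc 0 T ×ˢ Set.Icc 0 L))
    (hEcont : ContinuousOn (fun q : ℝ × ℝ => E q.1 q.2) (Set.Icc 0 T ×ˢ Set.Icc 0 L))
    (hIcont : ContinuousOn (fun q : ℝ × ℝ => I q.1 q.2) (Set.Icc 0 T ×ˢ Set.Icc 0 L))
    (hRcont : ContinuousOn (fun q : ℝ × ℝ => R q.1 q.2) (Set.Icc 0 T ×ˢ Set.Icc 0 L))
    -- time partial derivatives on (0,T] × (0,L)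
    (hSt : ∀ t ∈ Set.Ioc 0 T, ∀ x ∈ Set.Ioo 0 L, HasDerivAt (fun τ => S τ x) (St t x) t)
    (hEt : ∀ t ∈ Set.Ioc 0 T, ∀ x ∈ Set.Ioo 0 L, HasDerivAt (fun τ => E τ x) (Et t x) t)
    (hIt : ∀ t ∈ Set.Ioc 0 T, ∀ x ∈ Set.Ioo 0 L, HasDerivAt (fun τ => I τ x) (It t x) t)
    (hRt : ∀ t ∈ Set.Ioc 0 T, ∀ x ∈ Set.Ioo 0 L, HasDerivAt (fun τ => R τ x) (Rt t x) t)
    -- first spatial partial derivatives on (0,T] × [0,L] (one-sided at the endpoints)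
    (hSx : ∀ t ∈ Set.Ioc 0 T, ∀ x ∈ Set.Icc 0 L,
      HasDerivWithinAt (fun y => S t y) (Sx t x) (Set.Icc 0 L) x)
    (hEx : ∀ t ∈ Set.Ioc 0 T, ∀ x ∈ Set.Icc 0 L,
      HasDerivWithinAt (fun y => E t y) (Ex t x) (Set.Icc 0 L) x)
    (hIx : ∀ t ∈ Set.Ioc 0 T, ∀ x ∈ Set.Icc 0 L,
      HasDerivWithinAt (fun y => I t y) (Ix t x) (Set.Icc 0 L) x)
    (hRx : ∀ t ∈ Set.Ioc 0 T, ∀ x ∈ Set.Icc 0 L,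
      HasDerivWithinAt (fun y => R t y) (Rx t x) (Set.Icc 0 L) x)
    -- second spatial partial derivatives on (0,T] × (0,L)
    (hSxx : ∀ t ∈ Set.Ioc 0 T, ∀ x ∈ Set.Ioo 0 L, HasDerivAt (fun y => Sx t y) (Sxx t x) x)
    (hExx : ∀ t ∈ Set.Ioc 0 T, ∀ x ∈ Set.Ioo 0 L, HasDerivAt (fun y => Ex t y) (Exx t x) x)
    (hIxx : ∀ t ∈ Set.Ioc 0 T, ∀ x ∈ Set.Ioo 0 L, HasDerivAt (fun y => Ix t y) (Ixx t x) x)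
    (hRxx : ∀ t ∈ Set.Ioc 0 T, ∀ x ∈ Set.Ioo 0 L, HasDerivAt (fun y => Rx t y) (Rxx t x) x)
    -- the SEIR reaction–diffusion equations on (0,T] × (0,L)
    (heqS : ∀ t ∈ Set.Ioc 0 T, ∀ x ∈ Set.Ioo 0 L,
      St t x = lam * Sxx t x + Λ - β * S t x * I t x - μ * S t x)
    (heqE : ∀ t ∈ Set.Ioc 0 T, ∀ x ∈ Set.Ioo 0 L,
      Et t x = lam * Exx t x + β * p * S t x * I t x - (δ + η + μ) * E t x)
    (heqI : ∀ t ∈ Set.Ioc 0 T, ∀ x ∈ Set.Ioo 0 L,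
      It t x = lam * Ixx t x + β * (1 - p) * S t x * I t x + δ * E t x - (γ + μ) * I t x)
    (heqR : ∀ t ∈ Set.Ioc 0 T, ∀ x ∈ Set.Ioo 0 L,
      Rt t x = lam * Rxx t x + η * E t x + γ * I t x - μ * R t x)
    -- homogeneous Neumann boundary conditions
    (hbcS : ∀ t ∈ Set.Ioc 0 T, Sx t 0 = 0 ∧ Sx t L = 0)
    (hbcE : ∀ t ∈ Set.Ioc 0 T, Ex t 0 = 0 ∧ Ex t L = 0)
    (hbcI : ∀ t ∈ Set.Ioc 0 T, Ix t 0 = 0 ∧ Ix t L = 0)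
    (hbcR : ∀ t ∈ Set.Ioc 0 T, Rx t 0 = 0 ∧ Rx t L = 0)
    -- nonnegative initial data
    (hS0 : ∀ x ∈ Set.Icc 0 L, 0 ≤ S 0 x) (hE0 : ∀ x ∈ Set.Icc 0 L, 0 ≤ E 0 x)
    (hI0 : ∀ x ∈ Set.Icc 0 L, 0 ≤ I 0 x) (hR0 : ∀ x ∈ Set.Icc 0 L, 0 ≤ R 0 x) :
    ∀ t ∈ Set.Icc 0 T, ∀ x ∈ Set.Icc 0 L,
      0 ≤ S t x ∧ 0 ≤ E t x ∧ 0 ≤ I t x ∧ 0 ≤ R t x := by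
  obtain ⟨MS, hMS⟩ := (isCompact_Icc.prod isCompact_Icc).exists_bound_of_continuousOn hScont
  obtain ⟨MI, hMI⟩ := (isCompact_Icc.prod isCompact_Icc).exists_bound_of_continuousOn hIcont
  have hreaction : ∀ t ∈ Ioc 0 T, ∀ x ∈ Ioo 0 L, ∀ i,
      ![St, Et, It, Rt] i t x - lam * ![Sxx, Exx, Ixx, Rxx] i t x =
        seirReaction Λ μ β p δ η γ (fun j => ![S, E, I, R] j t x) i := by
    intro t ht x hx i
    fin_cases i <;> simp only [seirReaction, Fin.zero_eta, Fin.mk_one, Fin.reduceFinMk, Fin.isValue,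
      Matrix.cons_val, Matrix.cons_val_zero, Matrix.cons_val_one] <;>
      linarith [heqS t ht x hx, heqE t ht x hx, heqI t ht x hx, heqR t ht x hx]
  have hnonneg := nonneg_of_quasipositive (u := ![S, E, I, R]) (ut := ![St, Et, It, Rt])
    (ux := ![Sx, Ex, Ix, Rx]) (uxx := ![Sxx, Exx, Ixx, Rxx]) (C := β * max MS MI + δ + η + γ)
    hL hlam.le (fun i => by fin_cases i; exacts [hScont, hEcont, hIcont, hRcont])
    (fun i => by fin_cases i; exacts [hSt, hEt, hIt, hRt])
    (fun i => by fin_cases i; exacts [hSx, hEx, hIx, hRx])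
    (fun i => by fin_cases i; exacts [hSxx, hExx, hIxx, hRxx])
    (fun i => by fin_cases i; exacts [hbcS, hbcE, hbcI, hbcR])
    (fun t ht x hx c hc i hv hvi => hreaction t ht x hx i ▸
      seirReaction_quasipositive hΛ hμ.le hβ hp0 hp1 hδ hη hγ
        ((hMS (t, x) ⟨Ioc_subset_Icc_self ht, Ioo_subset_Icc_self hx⟩).trans (le_max_left _ _))
        ((hMI (t, x) ⟨Ioc_subset_Icc_self ht, Ioo_subset_Icc_self hx⟩).trans (le_max_right _ _))
        hc.le hv hvi)
    (fun i => by fin_cases i; exacts [hS0, hE0, hI0, hR0])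
  exact fun t ht x hx => ⟨hnonneg 0 t ht x hx, hnonneg 1 t ht x hx, hnonneg 2 t ht x hx,
    hnonneg 3 t ht x hx⟩

/-- A classical solution of the 1D SEIR reaction–diffusion system on
`[0,T]×[0,L]` with nonnegative initial data stays nonnegative on `[0,T]×[0,L]`. -/
theorem seir_classical_solution_nonneg
    (Λ μ β p δ η γ lam T L : ℝ)
    (hΛ : 0 ≤ Λ) (hμ : 0 < μ) (hβ : 0 ≤ β) (hp0 : 0 ≤ p) (hp1 : p ≤ 1)
    (hδ : 0 ≤ δ) (hη : 0 ≤ η) (hγ : 0 ≤ γ) (hlam : 0 < lam)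
    (hT : 0 < T) (hL : 0 < L)
    (S E I R : ℝ → ℝ → ℝ)
    -- partial derivatives: in time (·t), first (·x) and second (·xx) in space
    (St Et It Rt Sx Ex Ix Rx Sxx Exx Ixx Rxx : ℝ → ℝ → ℝ)
    -- continuity on the closed space-time cylinder [0,T] × [0,L]
    (hScont : ContinuousOn (fun q : ℝ × ℝ => S q.1 q.2) (Set.Icc 0 T ×ˢ Set.Icc 0 L))
    (hEcont : ContinuousOn (fun q : ℝ × ℝ => E q.1 q.2) (Set.Icc 0 T ×ˢ Set.Icc 0 L))
    (hIcont : ContinuousOn (fun q : ℝ × ℝ => I q.1 q.2) (Set.Icc 0 T ×ˢ Set.Icc 0 L))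
    (hRcont : ContinuousOn (fun q : ℝ × ℝ => R q.1 q.2) (Set.Icc 0 T ×ˢ Set.Icc 0 L))
    -- time partial derivatives on (0,T] × (0,L)
    (hSt : ∀ t ∈ Set.Ioc 0 T, ∀ x ∈ Set.Ioo 0 L, HasDerivAt (fun τ => S τ x) (St t x) t)
    (hEt : ∀ t ∈ Set.Ioc 0 T, ∀ x ∈ Set.Ioo 0 L, HasDerivAt (fun τ => E τ x) (Et t x) t)
    (hIt : ∀ t ∈ Set.Ioc 0 T, ∀ x ∈ Set.Ioo 0 L, HasDerivAt (fun τ => I τ x) (It t x) t)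
    (hRt : ∀ t ∈ Set.Ioc 0 T, ∀ x ∈ Set.Ioo 0 L, HasDerivAt (fun τ => R τ x) (Rt t x) t)
    -- first spatial partial derivatives on (0,T] × [0,L] (one-sided at the endpoints)
    (hSx : ∀ t ∈ Set.Ioc 0 T, ∀ x ∈ Set.Icc 0 L,
      HasDerivWithinAt (fun y => S t y) (Sx t x) (Set.Icc 0 L) x)
    (hEx : ∀ t ∈ Set.Ioc 0 T, ∀ x ∈ Set.Icc 0 L,
      HasDerivWithinAt (fun y => E t y) (Ex t x) (Set.Icc 0 L) x)
    (hIx : ∀ t ∈ Set.Ioc 0 T, ∀ x ∈ Set.Icc 0 L,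
      HasDerivWithinAt (fun y => I t y) (Ix t x) (Set.Icc 0 L) x)
    (hRx : ∀ t ∈ Set.Ioc 0 T, ∀ x ∈ Set.Icc 0 L,
      HasDerivWithinAt (fun y => R t y) (Rx t x) (Set.Icc 0 L) x)
    -- second spatial partial derivatives on (0,T] × (0,L)
    (hSxx : ∀ t ∈ Set.Ioc 0 T, ∀ x ∈ Set.Ioo 0 L, HasDerivAt (fun y => Sx t y) (Sxx t x) x)
    (hExx : ∀ t ∈ Set.Ioc 0 T, ∀ x ∈ Set.Ioo 0 L, HasDerivAt (fun y => Ex t y) (Exx t x) x)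
    (hIxx : ∀ t ∈ Set.Ioc 0 T, ∀ x ∈ Set.Ioo 0 L, HasDerivAt (fun y => Ix t y) (Ixx t x) x)
    (hRxx : ∀ t ∈ Set.Ioc 0 T, ∀ x ∈ Set.Ioo 0 L, HasDerivAt (fun y => Rx t y) (Rxx t x) x)
    -- the SEIR reaction–diffusion equations on (0,T] × (0,L)
    (heqS : ∀ t ∈ Set.Ioc 0 T, ∀ x ∈ Set.Ioo 0 L,
      St t x = lam * Sxx t x + Λ - β * S t x * I t x - μ * S t x)
    (heqE : ∀ t ∈ Set.Ioc 0 T, ∀ x ∈ Set.Ioo 0 L,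
      Et t x = lam * Exx t x + β * p * S t x * I t x - (δ + η + μ) * E t x)
    (heqI : ∀ t ∈ Set.Ioc 0 T, ∀ x ∈ Set.Ioo 0 L,
      It t x = lam * Ixx t x + β * (1 - p) * S t x * I t x + δ * E t x - (γ + μ) * I t x)
    (heqR : ∀ t ∈ Set.Ioc 0 T, ∀ x ∈ Set.Ioo 0 L,
      Rt t x = lam * Rxx t x + η * E t x + γ * I t x - μ * R t x)
    -- homogeneous Neumann boundary conditions
    (hbcS : ∀ t ∈ Set.Ioc 0 T, Sx t 0 = 0 ∧ Sx t L = 0)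
    (hbcE : ∀ t ∈ Set.Ioc 0 T, Ex t 0 = 0 ∧ Ex t L = 0)
    (hbcI : ∀ t ∈ Set.Ioc 0 T, Ix t 0 = 0 ∧ Ix t L = 0)
    (hbcR : ∀ t ∈ Set.Ioc 0 T, Rx t 0 = 0 ∧ Rx t L = 0)
    -- nonnegative initial data
    (hS0 : ∀ x ∈ Set.Icc 0 L, 0 ≤ S 0 x) (hE0 : ∀ x ∈ Set.Icc 0 L, 0 ≤ E 0 x)
    (hI0 : ∀ x ∈ Set.Icc 0 L, 0 ≤ I 0 x) (hR0 : ∀ x ∈ Set.Icc 0 L, 0 ≤ R 0 x) :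
    ∀ t ∈ Set.Icc 0 T, ∀ x ∈ Set.Icc 0 L,
      0 ≤ S t x ∧ 0 ≤ E t x ∧ 0 ≤ I t x ∧ 0 ≤ R t x :=
  seir_classical_solution_nonneg_general Λ μ β p δ η γ lam T L hΛ hμ hβ hp0 hp1 hδ hη hγ hlam hL S E
    I R St Et It Rt Sx Ex Ix Rx Sxx Exx Ixx Rxx hScont hEcont hIcont hRcont hSt hEt hIt hRt hSx hEx
    hIx hRx hSxx hExx hIxx hRxx heqS heqE heqI heqR hbcS hbcE hbcI hbcR hS0 hE0 hI0 hR0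
end

section
/- Let (S,E,I,R) be a classical solution of the 1D SEIR reaction–diffusion system on [0,T]×[0,L] with λ > 0, and let N = S + E + I + R. Then for all (t,x) ∈ [0,T]×[0,L] one has N(t,x) ≤ max( max_{y∈[0,L]} N(0,y), Λ/μ ). In particular, if N(0,y) ≤ Λ/μ for all y ∈ [0,L], then N(t,x) ≤ Λ/μ for all (t,x) ∈ [0,T]×[0,L]. -/
/-!
Adding the four equations, the nonlinear and transfer terms cancel and `N = S + E + I + R`
solves `N_t = λ N_xx + Λ - μ N` with homogeneous Neumann data. For this linear problem the
bound `N ≤ K` (whenever `Λ / μ ≤ K` and `N(0, ·) ≤ K`) is a weak maximum principle: maximise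
`N - σ (x - L/2)^2` over the closed cylinder. The parabola has strictly outward slope at
`x = 0` and `x = L`, so the Neumann condition rules out a boundary maximum; at an interior
maximum with `t > 0` one has `N_t ≥ 0` and `N_xx ≤ 2σ`, which contradicts the equation as soon as
the maximum exceeds `K + 2λσ/μ`. Letting `σ → 0` gives the bound.
-/

open Set Filter Topology

theorem IsMaxOn.hasDerivWithinAt_Icc_left_nonpos {f : ℝ → ℝ} {f' a b : ℝ} (hab : a < b)
    (hmax : IsMaxOn f (Icc a b) a) (hf : HasDerivWithinAt f f' (Icc a b) a) : f' ≤ 0 := by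
  have h := hmax.localize.hasFDerivWithinAt_nonpos hf.hasFDerivWithinAt
    (sub_mem_posTangentConeAt_of_segment_subset (segment_subset_Icc hab.le))
  simp only [ContinuousLinearMap.toSpanSingleton_apply, smul_eq_mul] at h
  nlinarith

theorem IsMaxOn.hasDerivWithinAt_Icc_right_nonneg {f : ℝ → ℝ} {f' a b : ℝ} (hab : a < b)
    (hmax : IsMaxOn f (Icc a b) b) (hf : HasDerivWithinAt f f' (Icc a b) b) : 0 ≤ f' := by
  have hseg : segment ℝ b a ⊆ Icc a b := segment_symm ℝ b a ▸ segment_subset_Icc hab.le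
  have h := hmax.localize.hasFDerivWithinAt_nonpos hf.hasFDerivWithinAt
    (sub_mem_posTangentConeAt_of_segment_subset hseg)
  simp only [ContinuousLinearMap.toSpanSingleton_apply, smul_eq_mul] at h
  nlinarith

theorem IsLocalMax.second_deriv_nonpos {g g' : ℝ → ℝ} {x₀ g'' : ℝ}
    (hmax : IsLocalMax g x₀) (hg : ∀ᶠ x in 𝓝 x₀, HasDerivAt g (g' x) x)
    (hg' : HasDerivAt g' g'' x₀) : g'' ≤ 0 := by
  by_contra! hpos
  have hcrit : g' x₀ = 0 := hmax.hasDerivAt_eq_zero hg.self_of_nhds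
  -- `g'` vanishes at `x₀` with positive slope, so `g` strictly increases just to its right.
  have hsign := eventually_nhdsWithin_sign_eq_of_deriv_pos (hg'.deriv ▸ hpos) hcrit
  have hright : ∀ᶠ x in 𝓝[>] x₀, 0 < g' x ∧ HasDerivAt g (g' x) x ∧ g x ≤ g x₀ := by
    filter_upwards [nhdsWithin_le_nhds hsign, nhdsWithin_le_nhds hg, nhdsWithin_le_nhds hmax,
      self_mem_nhdsWithin] with x hs hd hm (hx : x₀ < x)
    refine ⟨?_, hd, hm⟩
    rwa [sign_pos (sub_pos.2 hx), sign_eq_one_iff] at hs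
  obtain ⟨u, hu, hsub⟩ := mem_nhdsGT_iff_exists_Ioc_subset.1 hright
  have hcont : ContinuousOn g (Icc x₀ u) := fun x hx =>
    (hx.1.eq_or_lt.elim (fun h => h ▸ hg.self_of_nhds) fun h => (hsub ⟨h, hx.2⟩).2.1)
      |>.continuousAt.continuousWithinAt
  obtain ⟨c, hc, hslope⟩ := exists_hasDerivAt_eq_slope g g' hu hcont
    fun x hx => (hsub (Ioo_subset_Ioc_self hx)).2.1
  have hgc : 0 < g' c := (hsub (Ioo_subset_Ioc_self hc)).1
  rw [hslope, div_pos_iff_of_pos_right (sub_pos.2 hu)] at hgc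
  linarith [(hsub (right_mem_Ioc.2 hu)).2.2]

theorem hasDerivAt_mul_sub_sq (σ c y : ℝ) :
    HasDerivAt (fun y => σ * (y - c) ^ 2) (2 * σ * (y - c)) y :=
  ((((hasDerivAt_id' y).sub_const c).fun_pow 2).const_mul σ).congr_deriv (by norm_num; ring)

theorem mem_Ioo_of_isMaxOn_sub_parabola {u u' : ℝ → ℝ} {L σ x₀ : ℝ} (hL : 0 < L) (hσ : 0 < σ)
    (hu : ∀ y ∈ Icc 0 L, HasDerivWithinAt u (u' y) (Icc 0 L) y) (hu'0 : u' 0 = 0) (hu'L : u' L = 0)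
    (hmax : IsMaxOn (fun y => u y - σ * (y - L / 2) ^ 2) (Icc 0 L) x₀) (hx₀ : x₀ ∈ Icc 0 L) :
    x₀ ∈ Ioo 0 L := by
  have hg : ∀ y ∈ Icc 0 L, HasDerivWithinAt (fun y => u y - σ * (y - L / 2) ^ 2)
      (u' y - 2 * σ * (y - L / 2)) (Icc 0 L) y := fun y hy =>
    (hu y hy).sub (hasDerivAt_mul_sub_sq σ (L / 2) y).hasDerivWithinAt
  refine ⟨hx₀.1.lt_of_ne ?_, hx₀.2.lt_of_ne ?_⟩
  · rintro rfl
    have := hmax.hasDerivWithinAt_Icc_left_nonpos hL (hg 0 hx₀)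
    rw [hu'0] at this
    nlinarith
  · rintro rfl
    have := hmax.hasDerivWithinAt_Icc_right_nonneg hL (hg x₀ hx₀)
    rw [hu'L] at this
    nlinarith

theorem le_of_isMaxOn_sub_parabola {u u' : ℝ → ℝ} {L σ x₀ u'' : ℝ}
    (hu : ∀ y ∈ Icc 0 L, HasDerivWithinAt u (u' y) (Icc 0 L) y) (hu' : HasDerivAt u' u'' x₀)
    (hmax : IsMaxOn (fun y => u y - σ * (y - L / 2) ^ 2) (Icc 0 L) x₀) (hx₀ : x₀ ∈ Ioo 0 L) :
    u'' ≤ 2 * σ := by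
  have hg : ∀ᶠ y in 𝓝 x₀, HasDerivAt (fun y => u y - σ * (y - L / 2) ^ 2)
      (u' y - 2 * σ * (y - L / 2)) y := by
    filter_upwards [Ioo_mem_nhds hx₀.1 hx₀.2] with y hy
    exact ((hu y (Ioo_subset_Icc_self hy)).hasDerivAt (Icc_mem_nhds hy.1 hy.2)).sub
      (hasDerivAt_mul_sub_sq σ (L / 2) y)
  have := (hmax.localize.isLocalMax (Icc_mem_nhds hx₀.1 hx₀.2)).second_deriv_nonpos hg
    (hu'.sub (((hasDerivAt_id' x₀).sub_const (L / 2)).const_mul (2 * σ)))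
  linarith

structure IsClassicalNeumann (T L : ℝ) (u ut ux uxx : ℝ → ℝ → ℝ) : Prop where
  continuousOn : ContinuousOn (fun q : ℝ × ℝ => u q.1 q.2) (Icc 0 T ×ˢ Icc 0 L)
  hasDerivAt_t : ∀ t ∈ Ioc 0 T, ∀ x ∈ Ioo 0 L, HasDerivAt (fun τ => u τ x) (ut t x) t
  hasDerivWithinAt_x : ∀ t ∈ Ioc 0 T, ∀ x ∈ Icc 0 L,
    HasDerivWithinAt (fun y => u t y) (ux t x) (Icc 0 L) x
  hasDerivAt_xx : ∀ t ∈ Ioc 0 T, ∀ x ∈ Ioo 0 L, HasDerivAt (fun y => ux t y) (uxx t x) x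
  neumann : ∀ t ∈ Ioc 0 T, ux t 0 = 0 ∧ ux t L = 0

namespace IsClassicalNeumann

variable {T L lam Λ μ K : ℝ} {u ut ux uxx : ℝ → ℝ → ℝ}

theorem add {v vt vx vxx : ℝ → ℝ → ℝ} (hu : IsClassicalNeumann T L u ut ux uxx)
    (hv : IsClassicalNeumann T L v vt vx vxx) :
    IsClassicalNeumann T L (u + v) (ut + vt) (ux + vx) (uxx + vxx) where
  continuousOn := hu.continuousOn.add hv.continuousOn
  hasDerivAt_t t ht x hx := (hu.hasDerivAt_t t ht x hx).add (hv.hasDerivAt_t t ht x hx)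
  hasDerivWithinAt_x t ht x hx :=
    (hu.hasDerivWithinAt_x t ht x hx).add (hv.hasDerivWithinAt_x t ht x hx)
  hasDerivAt_xx t ht x hx := (hu.hasDerivAt_xx t ht x hx).add (hv.hasDerivAt_xx t ht x hx)
  neumann t ht := by
    simp only [Pi.add_apply, (hu.neumann t ht).1, (hu.neumann t ht).2, (hv.neumann t ht).1,
      (hv.neumann t ht).2, add_zero, and_self]

theorem bddAbove_image_initial (hu : IsClassicalNeumann T L u ut ux uxx) (hT : 0 ≤ T) :
    BddAbove ((u 0) '' Icc 0 L) := by
  have hslice : ContinuousOn (u 0) (Icc 0 L) :=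
    hu.continuousOn.comp (Continuous.continuousOn (f := fun y : ℝ => ((0 : ℝ), y)) (by fun_prop))
      fun _ hy => ⟨left_mem_Icc.2 hT, hy⟩
  exact (isCompact_Icc.image_of_continuousOn hslice).bddAbove

theorem sub_parabola_le (hu : IsClassicalNeumann T L u ut ux uxx) (hL : 0 < L) (hμ : 0 < μ)
    (hlam : 0 ≤ lam)
    (hsub : ∀ t ∈ Ioc 0 T, ∀ x ∈ Ioo 0 L, ut t x ≤ lam * uxx t x + Λ - μ * u t x)
    (hK : Λ / μ ≤ K) (h0 : ∀ y ∈ Icc 0 L, u 0 y ≤ K) {σ : ℝ} (hσ : 0 < σ) :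
    ∀ t ∈ Icc 0 T, ∀ x ∈ Icc 0 L, u t x - σ * (x - L / 2) ^ 2 ≤ K + 2 * lam * σ / μ := by
  intro t ht x hx
  have hv : ContinuousOn (fun q : ℝ × ℝ => u q.1 q.2 - σ * (q.2 - L / 2) ^ 2)
      (Icc 0 T ×ˢ Icc 0 L) := hu.continuousOn.sub (by fun_prop)
  obtain ⟨⟨t₀, x₀⟩, ⟨ht₀, hx₀⟩, hmax⟩ :=
    (isCompact_Icc.prod isCompact_Icc).exists_isMaxOn ⟨(t, x), ht, hx⟩ hv
  rw [isMaxOn_iff] at hmax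
  refine (hmax (t, x) ⟨ht, hx⟩).trans (not_lt.1 fun hbig => ?_)
  have hslack : 0 ≤ 2 * lam * σ / μ := by positivity
  have ht₀pos : t₀ ∈ Ioc 0 T := by
    refine ⟨ht₀.1.lt_of_ne ?_, ht₀.2⟩
    rintro rfl
    linarith [h0 x₀ hx₀, mul_nonneg hσ.le (sq_nonneg (x₀ - L / 2))]
  have hslice : IsMaxOn (fun y => u t₀ y - σ * (y - L / 2) ^ 2) (Icc 0 L) x₀ :=
    fun y hy => hmax (t₀, y) ⟨ht₀, hy⟩
  have hx₀i := mem_Ioo_of_isMaxOn_sub_parabola hL hσ (hu.hasDerivWithinAt_x t₀ ht₀pos)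
    (hu.neumann t₀ ht₀pos).1 (hu.neumann t₀ ht₀pos).2 hslice hx₀
  have hxx : uxx t₀ x₀ ≤ 2 * σ := le_of_isMaxOn_sub_parabola (hu.hasDerivWithinAt_x t₀ ht₀pos)
    (hu.hasDerivAt_xx t₀ ht₀pos x₀ hx₀i) hslice hx₀i
  have htime : 0 ≤ ut t₀ x₀ := by
    refine IsMaxOn.hasDerivWithinAt_Icc_right_nonneg ht₀pos.1 (fun τ hτ => ?_)
      (hu.hasDerivAt_t t₀ ht₀pos x₀ hx₀i).hasDerivWithinAt
    have := hmax (τ, x₀) ⟨⟨hτ.1, hτ.2.trans ht₀.2⟩, hx₀⟩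
    simpa using this
  have hΛ : Λ ≤ μ * K := (div_le_iff₀' hμ).1 hK
  have hbig' : μ * K + 2 * lam * σ < μ * u t₀ x₀ := by
    have : K + 2 * lam * σ / μ < u t₀ x₀ := by
      linarith [mul_nonneg hσ.le (sq_nonneg (x₀ - L / 2))]
    calc μ * K + 2 * lam * σ = μ * (K + 2 * lam * σ / μ) := by field_simp
      _ < μ * u t₀ x₀ := by gcongr
  linarith [hsub t₀ ht₀pos x₀ hx₀i, mul_le_mul_of_nonneg_left hxx hlam]

theorem le_of_initial_le (hu : IsClassicalNeumann T L u ut ux uxx) (hL : 0 < L) (hμ : 0 < μ)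
    (hlam : 0 ≤ lam)
    (hsub : ∀ t ∈ Ioc 0 T, ∀ x ∈ Ioo 0 L, ut t x ≤ lam * uxx t x + Λ - μ * u t x)
    (hK : Λ / μ ≤ K) (h0 : ∀ y ∈ Icc 0 L, u 0 y ≤ K) :
    ∀ t ∈ Icc 0 T, ∀ x ∈ Icc 0 L, u t x ≤ K := by
  intro t ht x hx
  have hlim : Tendsto (fun σ => K + σ * (2 * lam / μ + (x - L / 2) ^ 2)) (𝓝[>] 0) (𝓝 K) := by
    have := (Continuous.tendsto (by fun_prop :
      Continuous fun σ : ℝ => K + σ * (2 * lam / μ + (x - L / 2) ^ 2)) 0).mono_left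
      (nhdsWithin_le_nhds (s := Ioi 0))
    simpa using this
  refine ge_of_tendsto hlim (eventually_nhdsWithin_of_forall fun σ hσ => ?_)
  have := hu.sub_parabola_le hL hμ hlam hsub hK h0 hσ t ht x hx
  have : 2 * lam * σ / μ = σ * (2 * lam / μ) := by ring
  linarith [mul_nonneg hσ.le (sq_nonneg (x - L / 2))]

end IsClassicalNeumann

theorem seir_classical_solution_total_population_bound_general
    (Λ μ β p δ η γ lam T L : ℝ)
    (hμ : 0 < μ) (hlam : 0 < lam) (hL : 0 < L)
    (S E I R : ℝ → ℝ → ℝ)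
    -- partial derivatives: in time (·t), first (·x) and second (·xx) in space
    (St Et It Rt Sx Ex Ix Rx Sxx Exx Ixx Rxx : ℝ → ℝ → ℝ)
    -- continuity on the closed space-time cylinder [0,T] × [0,L]
    (hScont : ContinuousOn (fun q : ℝ × ℝ => S q.1 q.2) (Set.Icc 0 T ×ˢ Set.Icc 0 L))
    (hEcont : ContinuousOn (fun q : ℝ × ℝ => E q.1 q.2) (Set.Icc 0 T ×ˢ Set.Icc 0 L))
    (hIcont : ContinuousOn (fun q : ℝ × ℝ => I q.1 q.2) (Set.Icc 0 T ×ˢ Set.Icc 0 L))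
    (hRcont : ContinuousOn (fun q : ℝ × ℝ => R q.1 q.2) (Set.Icc 0 T ×ˢ Set.Icc 0 L))
    -- time partial derivatives on (0,T] × (0,L)
    (hSt : ∀ t ∈ Set.Ioc 0 T, ∀ x ∈ Set.Ioo 0 L, HasDerivAt (fun τ => S τ x) (St t x) t)
    (hEt : ∀ t ∈ Set.Ioc 0 T, ∀ x ∈ Set.Ioo 0 L, HasDerivAt (fun τ => E τ x) (Et t x) t)
    (hIt : ∀ t ∈ Set.Ioc 0 T, ∀ x ∈ Set.Ioo 0 L, HasDerivAt (fun τ => I τ x) (It t x) t)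
    (hRt : ∀ t ∈ Set.Ioc 0 T, ∀ x ∈ Set.Ioo 0 L, HasDerivAt (fun τ => R τ x) (Rt t x) t)
    -- first spatial partial derivatives on (0,T] × [0,L] (one-sided at the endpoints)
    (hSx : ∀ t ∈ Set.Ioc 0 T, ∀ x ∈ Set.Icc 0 L,
      HasDerivWithinAt (fun y => S t y) (Sx t x) (Set.Icc 0 L) x)
    (hEx : ∀ t ∈ Set.Ioc 0 T, ∀ x ∈ Set.Icc 0 L,
      HasDerivWithinAt (fun y => E t y) (Ex t x) (Set.Icc 0 L) x)
    (hIx : ∀ t ∈ Set.Ioc 0 T, ∀ x ∈ Set.Icc 0 L,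
      HasDerivWithinAt (fun y => I t y) (Ix t x) (Set.Icc 0 L) x)
    (hRx : ∀ t ∈ Set.Ioc 0 T, ∀ x ∈ Set.Icc 0 L,
      HasDerivWithinAt (fun y => R t y) (Rx t x) (Set.Icc 0 L) x)
    -- second spatial partial derivatives on (0,T] × (0,L)
    (hSxx : ∀ t ∈ Set.Ioc 0 T, ∀ x ∈ Set.Ioo 0 L, HasDerivAt (fun y => Sx t y) (Sxx t x) x)
    (hExx : ∀ t ∈ Set.Ioc 0 T, ∀ x ∈ Set.Ioo 0 L, HasDerivAt (fun y => Ex t y) (Exx t x) x)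
    (hIxx : ∀ t ∈ Set.Ioc 0 T, ∀ x ∈ Set.Ioo 0 L, HasDerivAt (fun y => Ix t y) (Ixx t x) x)
    (hRxx : ∀ t ∈ Set.Ioc 0 T, ∀ x ∈ Set.Ioo 0 L, HasDerivAt (fun y => Rx t y) (Rxx t x) x)
    -- the SEIR reaction–diffusion equations on (0,T] × (0,L)
    (heqS : ∀ t ∈ Set.Ioc 0 T, ∀ x ∈ Set.Ioo 0 L,
      St t x = lam * Sxx t x + Λ - β * S t x * I t x - μ * S t x)
    (heqE : ∀ t ∈ Set.Ioc 0 T, ∀ x ∈ Set.Ioo 0 L,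
      Et t x = lam * Exx t x + β * p * S t x * I t x - (δ + η + μ) * E t x)
    (heqI : ∀ t ∈ Set.Ioc 0 T, ∀ x ∈ Set.Ioo 0 L,
      It t x = lam * Ixx t x + β * (1 - p) * S t x * I t x + δ * E t x - (γ + μ) * I t x)
    (heqR : ∀ t ∈ Set.Ioc 0 T, ∀ x ∈ Set.Ioo 0 L,
      Rt t x = lam * Rxx t x + η * E t x + γ * I t x - μ * R t x)
    -- homogeneous Neumann boundary conditions
    (hbcS : ∀ t ∈ Set.Ioc 0 T, Sx t 0 = 0 ∧ Sx t L = 0)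
    (hbcE : ∀ t ∈ Set.Ioc 0 T, Ex t 0 = 0 ∧ Ex t L = 0)
    (hbcI : ∀ t ∈ Set.Ioc 0 T, Ix t 0 = 0 ∧ Ix t L = 0)
    (hbcR : ∀ t ∈ Set.Ioc 0 T, Rx t 0 = 0 ∧ Rx t L = 0) :
    (∀ t ∈ Set.Icc 0 T, ∀ x ∈ Set.Icc 0 L,
        S t x + E t x + I t x + R t x ≤
          max (sSup ((fun y => S 0 y + E 0 y + I 0 y + R 0 y) '' Set.Icc 0 L)) (Λ / μ))
    ∧ ((∀ y ∈ Set.Icc 0 L, S 0 y + E 0 y + I 0 y + R 0 y ≤ Λ / μ) →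
        ∀ t ∈ Set.Icc 0 T, ∀ x ∈ Set.Icc 0 L,
          S t x + E t x + I t x + R t x ≤ Λ / μ) := by
  have hN := (((IsClassicalNeumann.mk hScont hSt hSx hSxx hbcS).add
    ⟨hEcont, hEt, hEx, hExx, hbcE⟩).add ⟨hIcont, hIt, hIx, hIxx, hbcI⟩).add
    ⟨hRcont, hRt, hRx, hRxx, hbcR⟩
  have hsub : ∀ t ∈ Ioc 0 T, ∀ x ∈ Ioo 0 L, (St + Et + It + Rt) t x ≤
      lam * (Sxx + Exx + Ixx + Rxx) t x + Λ - μ * (S + E + I + R) t x := by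
    intro t ht x hx
    simp only [Pi.add_apply]
    linarith [heqS t ht x hx, heqE t ht x hx, heqI t ht x hx, heqR t ht x hx]
  refine ⟨fun t ht => ?_, hN.le_of_initial_le hL hμ hlam.le hsub le_rfl⟩
  have hbdd := hN.bddAbove_image_initial (ht.1.trans ht.2)
  exact hN.le_of_initial_le hL hμ hlam.le hsub (le_max_right _ _)
    (fun y hy => le_max_of_le_left (le_csSup hbdd (mem_image_of_mem _ hy))) t ht

/-- For a classical solution of the 1D SEIR reaction–diffusion system,
the total population `N = S + E + I + R` satisfies
`N(t,x) ≤ max (max_y N(0,y)) (Λ/μ)` on `[0,T]×[0,L]`; in particular, if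
`N(0,·) ≤ Λ/μ` then `N ≤ Λ/μ` everywhere. -/
theorem seir_classical_solution_total_population_bound
    (Λ μ β p δ η γ lam T L : ℝ)
    (hΛ : 0 ≤ Λ) (hμ : 0 < μ) (hβ : 0 ≤ β) (hp0 : 0 ≤ p) (hp1 : p ≤ 1)
    (hδ : 0 ≤ δ) (hη : 0 ≤ η) (hγ : 0 ≤ γ) (hlam : 0 < lam)
    (hT : 0 < T) (hL : 0 < L)
    (S E I R : ℝ → ℝ → ℝ)
    -- partial derivatives: in time (·t), first (·x) and second (·xx) in space
    (St Et It Rt Sx Ex Ix Rx Sxx Exx Ixx Rxx : ℝ → ℝ → ℝ)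
    -- continuity on the closed space-time cylinder [0,T] × [0,L]
    (hScont : ContinuousOn (fun q : ℝ × ℝ => S q.1 q.2) (Set.Icc 0 T ×ˢ Set.Icc 0 L))
    (hEcont : ContinuousOn (fun q : ℝ × ℝ => E q.1 q.2) (Set.Icc 0 T ×ˢ Set.Icc 0 L))
    (hIcont : ContinuousOn (fun q : ℝ × ℝ => I q.1 q.2) (Set.Icc 0 T ×ˢ Set.Icc 0 L))
    (hRcont : ContinuousOn (fun q : ℝ × ℝ => R q.1 q.2) (Set.Icc 0 T ×ˢ Set.Icc 0 L))
    -- time partial derivatives on (0,T] × (0,L)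
    (hSt : ∀ t ∈ Set.Ioc 0 T, ∀ x ∈ Set.Ioo 0 L, HasDerivAt (fun τ => S τ x) (St t x) t)
    (hEt : ∀ t ∈ Set.Ioc 0 T, ∀ x ∈ Set.Ioo 0 L, HasDerivAt (fun τ => E τ x) (Et t x) t)
    (hIt : ∀ t ∈ Set.Ioc 0 T, ∀ x ∈ Set.Ioo 0 L, HasDerivAt (fun τ => I τ x) (It t x) t)
    (hRt : ∀ t ∈ Set.Ioc 0 T, ∀ x ∈ Set.Ioo 0 L, HasDerivAt (fun τ => R τ x) (Rt t x) t)
    -- first spatial partial derivatives on (0,T] × [0,L] (one-sided at the endpoints)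
    (hSx : ∀ t ∈ Set.Ioc 0 T, ∀ x ∈ Set.Icc 0 L,
      HasDerivWithinAt (fun y => S t y) (Sx t x) (Set.Icc 0 L) x)
    (hEx : ∀ t ∈ Set.Ioc 0 T, ∀ x ∈ Set.Icc 0 L,
      HasDerivWithinAt (fun y => E t y) (Ex t x) (Set.Icc 0 L) x)
    (hIx : ∀ t ∈ Set.Ioc 0 T, ∀ x ∈ Set.Icc 0 L,
      HasDerivWithinAt (fun y => I t y) (Ix t x) (Set.Icc 0 L) x)
    (hRx : ∀ t ∈ Set.Ioc 0 T, ∀ x ∈ Set.Icc 0 L,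
      HasDerivWithinAt (fun y => R t y) (Rx t x) (Set.Icc 0 L) x)
    -- second spatial partial derivatives on (0,T] × (0,L)
    (hSxx : ∀ t ∈ Set.Ioc 0 T, ∀ x ∈ Set.Ioo 0 L, HasDerivAt (fun y => Sx t y) (Sxx t x) x)
    (hExx : ∀ t ∈ Set.Ioc 0 T, ∀ x ∈ Set.Ioo 0 L, HasDerivAt (fun y => Ex t y) (Exx t x) x)
    (hIxx : ∀ t ∈ Set.Ioc 0 T, ∀ x ∈ Set.Ioo 0 L, HasDerivAt (fun y => Ix t y) (Ixx t x) x)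
    (hRxx : ∀ t ∈ Set.Ioc 0 T, ∀ x ∈ Set.Ioo 0 L, HasDerivAt (fun y => Rx t y) (Rxx t x) x)
    -- the SEIR reaction–diffusion equations on (0,T] × (0,L)
    (heqS : ∀ t ∈ Set.Ioc 0 T, ∀ x ∈ Set.Ioo 0 L,
      St t x = lam * Sxx t x + Λ - β * S t x * I t x - μ * S t x)
    (heqE : ∀ t ∈ Set.Ioc 0 T, ∀ x ∈ Set.Ioo 0 L,
      Et t x = lam * Exx t x + β * p * S t x * I t x - (δ + η + μ) * E t x)
    (heqI : ∀ t ∈ Set.Ioc 0 T, ∀ x ∈ Set.Ioo 0 L,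
      It t x = lam * Ixx t x + β * (1 - p) * S t x * I t x + δ * E t x - (γ + μ) * I t x)
    (heqR : ∀ t ∈ Set.Ioc 0 T, ∀ x ∈ Set.Ioo 0 L,
      Rt t x = lam * Rxx t x + η * E t x + γ * I t x - μ * R t x)
    -- homogeneous Neumann boundary conditions
    (hbcS : ∀ t ∈ Set.Ioc 0 T, Sx t 0 = 0 ∧ Sx t L = 0)
    (hbcE : ∀ t ∈ Set.Ioc 0 T, Ex t 0 = 0 ∧ Ex t L = 0)
    (hbcI : ∀ t ∈ Set.Ioc 0 T, Ix t 0 = 0 ∧ Ix t L = 0)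
    (hbcR : ∀ t ∈ Set.Ioc 0 T, Rx t 0 = 0 ∧ Rx t L = 0) :
    (∀ t ∈ Set.Icc 0 T, ∀ x ∈ Set.Icc 0 L,
        S t x + E t x + I t x + R t x ≤
          max (sSup ((fun y => S 0 y + E 0 y + I 0 y + R 0 y) '' Set.Icc 0 L)) (Λ / μ))
    ∧ ((∀ y ∈ Set.Icc 0 L, S 0 y + E 0 y + I 0 y + R 0 y ≤ Λ / μ) →
        ∀ t ∈ Set.Icc 0 T, ∀ x ∈ Set.Icc 0 L,
          S t x + E t x + I t x + R t x ≤ Λ / μ) :=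
  seir_classical_solution_total_population_bound_general Λ μ β p δ η γ lam T L hμ hlam hL S E I R St
    Et It Rt Sx Ex Ix Rx Sxx Exx Ixx Rxx hScont hEcont hIcont hRcont hSt hEt hIt hRt hSx hEx hIx hRx
    hSxx hExx hIxx hRxx heqS heqE heqI heqR hbcS hbcE hbcI hbcR
end

section
/- Let (S,E,I,R) be a classical solution of the 1D SEIR reaction–diffusion system on [0,T]×[0,L] with λ > 0, and let N = S + E + I + R. Set D = max(0, max_{y∈[0,L]} N(0,y) − Λ/μ). Then for all (t,x) ∈ [0,T]×[0,L] one has N(t,x) ≤ Λ/μ + D·e^{−μt}; in other words the excess of the total population above the carrying capacity Λ/μ decays at least at the exponential rate μ. -/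
open Filter Topology Set

/-!
Summing the four equations, the infection and transfer terms cancel, so `N = S + E + I + R`
solves `∂ₜN = λ ∂ₓₓN + Λ − μN` with Neumann conditions. Hence
`V = N − Λ/μ − D e^{−μt}` solves `∂ₜV = λ ∂ₓₓV − μV` with `V(0,·) ≤ 0`, and the weak maximum
principle gives `V ≤ 0`. For the maximum principle, maximise `V − ε (x − L/2)²` over the
cylinder: the penalty has slope `±εL` at `x = 0, L`, which together with the Neumann condition
keeps the maximum off the lateral boundary; at an interior maximum with `t > 0` the first- and
second-order conditions give `μV ≤ 2λε`, and `ε → 0`.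
-/

theorem IsLocalMaxOn.hasDerivWithinAt_sub_mul_nonpos {f : ℝ → ℝ} {s : Set ℝ} {a b d : ℝ}
    (h : IsLocalMaxOn f s a) (hf : HasDerivWithinAt f d s a) (hs : segment ℝ a b ⊆ s) :
    (b - a) * d ≤ 0 := by
  have hb : b - a ∈ posTangentConeAt s a :=
    mem_posTangentConeAt_of_segment_subset (by rwa [add_sub_cancel])
  simpa using h.hasFDerivWithinAt_nonpos hf.hasFDerivWithinAt hb

theorem IsLocalMax.hasDerivAt_deriv_nonpos {g g' : ℝ → ℝ} {a c : ℝ} (h : IsLocalMax g a)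
    (hg : ∀ᶠ y in 𝓝 a, HasDerivAt g (g' y) y) (hg' : HasDerivAt g' c a) : c ≤ 0 := by
  -- if `c > 0`, then `g' > 0` just right of `a`, so by the mean value theorem `g` increases there
  by_contra! hc
  have hga : g' a = 0 := h.hasDerivAt_eq_zero hg.self_of_nhds
  have hpos : ∀ᶠ y in 𝓝 a, a < y → 0 < g' y := by
    have hslope := (hasDerivAt_iff_tendsto_slope.mp hg').eventually (eventually_gt_nhds hc)
    filter_upwards [eventually_nhdsWithin_iff.mp hslope] with y hy hay
    have := hy hay.ne'
    rwa [slope_def_field, hga, sub_zero, div_pos_iff_of_pos_right (sub_pos.mpr hay)] at this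
  obtain ⟨l, u, ⟨hla, hau⟩, hsub⟩ := mem_nhds_iff_exists_Ioo_subset.mp (hg.and (h.and hpos))
  have hay : a < (a + u) / 2 := by linarith
  have hIcc : Icc a ((a + u) / 2) ⊆ Ioo l u := Icc_subset_Ioo hla (by linarith)
  obtain ⟨ξ, hξ, hslope⟩ := exists_hasDerivAt_eq_slope g g' hay
    (fun z hz => (hsub (hIcc hz)).1.continuousAt.continuousWithinAt)
    (fun z hz => (hsub (hIcc (Ioo_subset_Icc_self hz))).1)
  have hξpos : 0 < g' ξ := (hsub (hIcc (Ioo_subset_Icc_self hξ))).2.2 hξ.1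
  have hle : g ((a + u) / 2) ≤ g a := (hsub (hIcc (right_mem_Icc.mpr hay.le))).2.1
  rw [hslope] at hξpos
  exact hξpos.not_ge (div_nonpos_of_nonpos_of_nonneg (sub_nonpos.mpr hle) (by linarith))

structure HasNeumannDerivs (T L : ℝ) (V Vt Vx Vxx : ℝ → ℝ → ℝ) : Prop where
  continuousOn : ContinuousOn (fun q : ℝ × ℝ => V q.1 q.2) (Icc 0 T ×ˢ Icc 0 L)
  hasDerivAt_t : ∀ t ∈ Ioc 0 T, ∀ x ∈ Ioo 0 L, HasDerivAt (fun τ => V τ x) (Vt t x) t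
  hasDerivWithinAt_x : ∀ t ∈ Ioc 0 T, ∀ x ∈ Icc 0 L, HasDerivWithinAt (V t) (Vx t x) (Icc 0 L) x
  hasDerivAt_xx : ∀ t ∈ Ioc 0 T, ∀ x ∈ Ioo 0 L, HasDerivAt (Vx t) (Vxx t x) x
  neumann : ∀ t ∈ Ioc 0 T, Vx t 0 = 0 ∧ Vx t L = 0

namespace HasNeumannDerivs

variable {lam μ T L ε t₀ x₀ : ℝ} {V Vt Vx Vxx W Wt Wx Wxx : ℝ → ℝ → ℝ}

theorem add (hV : HasNeumannDerivs T L V Vt Vx Vxx) (hW : HasNeumannDerivs T L W Wt Wx Wxx) :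
    HasNeumannDerivs T L (V + W) (Vt + Wt) (Vx + Wx) (Vxx + Wxx) where
  continuousOn := hV.continuousOn.add hW.continuousOn
  hasDerivAt_t t ht x hx := (hV.hasDerivAt_t t ht x hx).add (hW.hasDerivAt_t t ht x hx)
  hasDerivWithinAt_x t ht x hx :=
    (hV.hasDerivWithinAt_x t ht x hx).add (hW.hasDerivWithinAt_x t ht x hx)
  hasDerivAt_xx t ht x hx := (hV.hasDerivAt_xx t ht x hx).add (hW.hasDerivAt_xx t ht x hx)
  neumann t ht := by
    simp only [Pi.add_apply, (hV.neumann t ht).1, (hV.neumann t ht).2, (hW.neumann t ht).1,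
      (hW.neumann t ht).2, add_zero, and_self]

theorem sub_time {g g' : ℝ → ℝ} (hV : HasNeumannDerivs T L V Vt Vx Vxx)
    (hg : ContinuousOn g (Icc 0 T)) (hg' : ∀ t ∈ Ioc 0 T, HasDerivAt g (g' t) t) :
    HasNeumannDerivs T L (fun t x => V t x - g t) (fun t x => Vt t x - g' t) Vx Vxx where
  continuousOn := hV.continuousOn.sub (hg.comp continuousOn_fst fun _ hq => hq.1)
  hasDerivAt_t t ht x hx := (hV.hasDerivAt_t t ht x hx).sub (hg' t ht)
  hasDerivWithinAt_x t ht x hx := (hV.hasDerivWithinAt_x t ht x hx).sub_const (g t)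
  hasDerivAt_xx := hV.hasDerivAt_xx
  neumann := hV.neumann

theorem hasDerivWithinAt_sub_sq (hV : HasNeumannDerivs T L V Vt Vx Vxx) (ht₀ : t₀ ∈ Ioc 0 T)
    {x : ℝ} (hx : x ∈ Icc 0 L) :
    HasDerivWithinAt (fun y => V t₀ y - ε * (y - L / 2) ^ 2)
      (Vx t₀ x - 2 * ε * (x - L / 2)) (Icc 0 L) x := by
  have hsq : HasDerivAt (fun y => ε * (y - L / 2) ^ 2) (2 * ε * (x - L / 2)) x :=
    ((((hasDerivAt_id' x).sub_const (L / 2)).fun_pow 2).const_mul ε).congr_deriv (by ring)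
  exact (hV.hasDerivWithinAt_x t₀ ht₀ x hx).sub hsq.hasDerivWithinAt

theorem mem_Ioo_of_isMaxOn_sub_sq (hV : HasNeumannDerivs T L V Vt Vx Vxx) (hL : 0 < L)
    (hε : 0 < ε) (ht₀ : t₀ ∈ Ioc 0 T) (hx₀ : x₀ ∈ Icc 0 L)
    (hmax : IsMaxOn (fun y => V t₀ y - ε * (y - L / 2) ^ 2) (Icc 0 L) x₀) :
    x₀ ∈ Ioo 0 L := by
  have hderiv := hV.hasDerivWithinAt_sub_sq (ε := ε) ht₀ hx₀
  refine ⟨hx₀.1.lt_of_ne fun h => ?_, hx₀.2.lt_of_ne fun h => ?_⟩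
  · have := hmax.localize.hasDerivWithinAt_sub_mul_nonpos hderiv
      (b := L) (by rw [← h, segment_eq_Icc hL.le])
    rw [← h, (hV.neumann t₀ ht₀).1] at this
    nlinarith [mul_pos hε (mul_pos hL hL)]
  · have := hmax.localize.hasDerivWithinAt_sub_mul_nonpos hderiv
      (b := 0) (by rw [h, segment_symm, segment_eq_Icc hL.le])
    rw [h, (hV.neumann t₀ ht₀).2] at this
    nlinarith [mul_pos hε (mul_pos hL hL)]

theorem mul_le_of_isMaxOn_sub_sq (hV : HasNeumannDerivs T L V Vt Vx Vxx) (hlam : 0 ≤ lam)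
    (hL : 0 < L) (hε : 0 < ε)
    (hpde : ∀ t ∈ Ioc 0 T, ∀ x ∈ Ioo 0 L, Vt t x ≤ lam * Vxx t x - μ * V t x)
    (ht₀ : t₀ ∈ Ioc 0 T) (hx₀ : x₀ ∈ Icc 0 L)
    (hmax : IsMaxOn (fun q : ℝ × ℝ => V q.1 q.2 - ε * (q.2 - L / 2) ^ 2)
      (Icc 0 T ×ˢ Icc 0 L) (t₀, x₀)) :
    μ * V t₀ x₀ ≤ 2 * lam * ε := by
  have hspace : IsMaxOn (fun y => V t₀ y - ε * (y - L / 2) ^ 2) (Icc 0 L) x₀ :=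
    fun y hy => hmax (mk_mem_prod (Ioc_subset_Icc_self ht₀) hy)
  have hx₀' := hV.mem_Ioo_of_isMaxOn_sub_sq hL hε ht₀ hx₀ hspace
  have hxx : Vxx t₀ x₀ - 2 * ε ≤ 0 := by
    refine (hspace.isLocalMax (Icc_mem_nhds hx₀'.1 hx₀'.2)).hasDerivAt_deriv_nonpos
      (g' := fun y => Vx t₀ y - 2 * ε * (y - L / 2)) ?_ ?_
    · filter_upwards [Ioo_mem_nhds hx₀'.1 hx₀'.2] with y hy
      exact (hV.hasDerivWithinAt_sub_sq ht₀ (Ioo_subset_Icc_self hy)).hasDerivAt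
        (Icc_mem_nhds hy.1 hy.2)
    · exact (hV.hasDerivAt_xx t₀ ht₀ x₀ hx₀').sub
        ((((hasDerivAt_id' x₀).sub_const (L / 2))).const_mul (2 * ε) |>.congr_deriv (mul_one _))
  have htime : IsMaxOn (fun τ => V τ x₀ - ε * (x₀ - L / 2) ^ 2) (Icc 0 t₀) t₀ :=
    fun s hs => hmax (mk_mem_prod ⟨hs.1, hs.2.trans ht₀.2⟩ hx₀)
  have ht : (0 - t₀) * Vt t₀ x₀ ≤ 0 :=
    htime.localize.hasDerivWithinAt_sub_mul_nonpos
      ((hV.hasDerivAt_t t₀ ht₀ x₀ hx₀').sub_const _).hasDerivWithinAt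
      (by rw [segment_symm, segment_eq_Icc ht₀.1.le])
  have hVt : 0 ≤ Vt t₀ x₀ := by nlinarith [ht₀.1]
  have hdiff : lam * Vxx t₀ x₀ ≤ lam * (2 * ε) := mul_le_mul_of_nonneg_left (by linarith) hlam
  linarith [hpde t₀ ht₀ x₀ hx₀']

theorem le_mul_of_subsolution (hV : HasNeumannDerivs T L V Vt Vx Vxx) (hμ : 0 < μ)
    (hlam : 0 ≤ lam) (hL : 0 < L)
    (hpde : ∀ t ∈ Ioc 0 T, ∀ x ∈ Ioo 0 L, Vt t x ≤ lam * Vxx t x - μ * V t x)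
    (hinit : ∀ x ∈ Icc 0 L, V 0 x ≤ 0) (hε : 0 < ε) {t x : ℝ} (ht : t ∈ Icc 0 T)
    (hx : x ∈ Icc 0 L) :
    V t x ≤ ε * (L ^ 2 + 2 * lam / μ) := by
  obtain ⟨⟨t₀, x₀⟩, ⟨ht₀, hx₀⟩, hmax⟩ := (isCompact_Icc.prod isCompact_Icc).exists_isMaxOn
    ⟨(t, x), ht, hx⟩ (hV.continuousOn.sub (Continuous.continuousOn
      (f := fun q : ℝ × ℝ => ε * (q.2 - L / 2) ^ 2) (by fun_prop)))
  have hle : V t x - ε * (x - L / 2) ^ 2 ≤ V t₀ x₀ - ε * (x₀ - L / 2) ^ 2 :=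
    hmax (mk_mem_prod ht hx)
  have hpen : ε * (x - L / 2) ^ 2 ≤ ε * L ^ 2 := by
    have : (x - L / 2) ^ 2 ≤ L ^ 2 := by nlinarith [hx.1, hx.2]
    exact mul_le_mul_of_nonneg_left this hε.le
  have hpen₀ : 0 ≤ ε * (x₀ - L / 2) ^ 2 := by positivity
  have hrest : 0 ≤ ε * (2 * lam / μ) := by positivity
  rcases ht₀.1.eq_or_lt with rfl | ht₀pos
  · linarith [hinit x₀ hx₀]
  · have hμV := hV.mul_le_of_isMaxOn_sub_sq hlam hL hε hpde ⟨ht₀pos, ht₀.2⟩ hx₀ hmax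
    have hV₀ : V t₀ x₀ ≤ ε * (2 * lam / μ) := by
      rw [mul_div_assoc', le_div_iff₀ hμ]; linarith
    linarith

theorem nonpos_of_subsolution (hV : HasNeumannDerivs T L V Vt Vx Vxx) (hμ : 0 < μ)
    (hlam : 0 ≤ lam) (hL : 0 < L)
    (hpde : ∀ t ∈ Ioc 0 T, ∀ x ∈ Ioo 0 L, Vt t x ≤ lam * Vxx t x - μ * V t x)
    (hinit : ∀ x ∈ Icc 0 L, V 0 x ≤ 0) :
    ∀ t ∈ Icc 0 T, ∀ x ∈ Icc 0 L, V t x ≤ 0 := by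
  intro t ht x hx
  have hlim : Tendsto (fun ε => ε * (L ^ 2 + 2 * lam / μ)) (𝓝[>] 0) (𝓝 0) := by
    refine tendsto_nhdsWithin_of_tendsto_nhds ?_
    simpa using (tendsto_id (x := 𝓝 (0 : ℝ))).mul_const (L ^ 2 + 2 * lam / μ)
  exact ge_of_tendsto hlim (eventually_nhdsWithin_of_forall fun ε hε =>
    hV.le_mul_of_subsolution hμ hlam hL hpde hinit hε ht hx)

end HasNeumannDerivs

theorem seir_classical_solution_exponential_decay_of_excess_general
    (Λ μ β p δ η γ lam T L : ℝ)
    (hμ : 0 < μ) (hlam : 0 < lam) (hL : 0 < L)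
    (S E I R : ℝ → ℝ → ℝ)
    -- partial derivatives: in time (·t), first (·x) and second (·xx) in space
    (St Et It Rt Sx Ex Ix Rx Sxx Exx Ixx Rxx : ℝ → ℝ → ℝ)
    -- continuity on the closed space-time cylinder [0,T] × [0,L]
    (hScont : ContinuousOn (fun q : ℝ × ℝ => S q.1 q.2) (Set.Icc 0 T ×ˢ Set.Icc 0 L))
    (hEcont : ContinuousOn (fun q : ℝ × ℝ => E q.1 q.2) (Set.Icc 0 T ×ˢ Set.Icc 0 L))
    (hIcont : ContinuousOn (fun q : ℝ × ℝ => I q.1 q.2) (Set.Icc 0 T ×ˢ Set.Icc 0 L))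
    (hRcont : ContinuousOn (fun q : ℝ × ℝ => R q.1 q.2) (Set.Icc 0 T ×ˢ Set.Icc 0 L))
    -- time partial derivatives on (0,T] × (0,L)
    (hSt : ∀ t ∈ Set.Ioc 0 T, ∀ x ∈ Set.Ioo 0 L, HasDerivAt (fun τ => S τ x) (St t x) t)
    (hEt : ∀ t ∈ Set.Ioc 0 T, ∀ x ∈ Set.Ioo 0 L, HasDerivAt (fun τ => E τ x) (Et t x) t)
    (hIt : ∀ t ∈ Set.Ioc 0 T, ∀ x ∈ Set.Ioo 0 L, HasDerivAt (fun τ => I τ x) (It t x) t)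
    (hRt : ∀ t ∈ Set.Ioc 0 T, ∀ x ∈ Set.Ioo 0 L, HasDerivAt (fun τ => R τ x) (Rt t x) t)
    -- first spatial partial derivatives on (0,T] × [0,L] (one-sided at the endpoints)
    (hSx : ∀ t ∈ Set.Ioc 0 T, ∀ x ∈ Set.Icc 0 L,
      HasDerivWithinAt (fun y => S t y) (Sx t x) (Set.Icc 0 L) x)
    (hEx : ∀ t ∈ Set.Ioc 0 T, ∀ x ∈ Set.Icc 0 L,
      HasDerivWithinAt (fun y => E t y) (Ex t x) (Set.Icc 0 L) x)
    (hIx : ∀ t ∈ Set.Ioc 0 T, ∀ x ∈ Set.Icc 0 L,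
      HasDerivWithinAt (fun y => I t y) (Ix t x) (Set.Icc 0 L) x)
    (hRx : ∀ t ∈ Set.Ioc 0 T, ∀ x ∈ Set.Icc 0 L,
      HasDerivWithinAt (fun y => R t y) (Rx t x) (Set.Icc 0 L) x)
    -- second spatial partial derivatives on (0,T] × (0,L)
    (hSxx : ∀ t ∈ Set.Ioc 0 T, ∀ x ∈ Set.Ioo 0 L, HasDerivAt (fun y => Sx t y) (Sxx t x) x)
    (hExx : ∀ t ∈ Set.Ioc 0 T, ∀ x ∈ Set.Ioo 0 L, HasDerivAt (fun y => Ex t y) (Exx t x) x)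
    (hIxx : ∀ t ∈ Set.Ioc 0 T, ∀ x ∈ Set.Ioo 0 L, HasDerivAt (fun y => Ix t y) (Ixx t x) x)
    (hRxx : ∀ t ∈ Set.Ioc 0 T, ∀ x ∈ Set.Ioo 0 L, HasDerivAt (fun y => Rx t y) (Rxx t x) x)
    -- the SEIR reaction–diffusion equations on (0,T] × (0,L)
    (heqS : ∀ t ∈ Set.Ioc 0 T, ∀ x ∈ Set.Ioo 0 L,
      St t x = lam * Sxx t x + Λ - β * S t x * I t x - μ * S t x)
    (heqE : ∀ t ∈ Set.Ioc 0 T, ∀ x ∈ Set.Ioo 0 L,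
      Et t x = lam * Exx t x + β * p * S t x * I t x - (δ + η + μ) * E t x)
    (heqI : ∀ t ∈ Set.Ioc 0 T, ∀ x ∈ Set.Ioo 0 L,
      It t x = lam * Ixx t x + β * (1 - p) * S t x * I t x + δ * E t x - (γ + μ) * I t x)
    (heqR : ∀ t ∈ Set.Ioc 0 T, ∀ x ∈ Set.Ioo 0 L,
      Rt t x = lam * Rxx t x + η * E t x + γ * I t x - μ * R t x)
    -- homogeneous Neumann boundary conditions
    (hbcS : ∀ t ∈ Set.Ioc 0 T, Sx t 0 = 0 ∧ Sx t L = 0)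
    (hbcE : ∀ t ∈ Set.Ioc 0 T, Ex t 0 = 0 ∧ Ex t L = 0)
    (hbcI : ∀ t ∈ Set.Ioc 0 T, Ix t 0 = 0 ∧ Ix t L = 0)
    (hbcR : ∀ t ∈ Set.Ioc 0 T, Rx t 0 = 0 ∧ Rx t L = 0) :
    ∀ t ∈ Set.Icc 0 T, ∀ x ∈ Set.Icc 0 L,
      S t x + E t x + I t x + R t x ≤
        Λ / μ +
          max 0 (sSup ((fun y => S 0 y + E 0 y + I 0 y + R 0 y) '' Set.Icc 0 L) - Λ / μ)
            * Real.exp (-μ * t) := by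
  intro t ht x hx
  set D := max 0 (sSup ((fun y => S 0 y + E 0 y + I 0 y + R 0 y) '' Set.Icc 0 L) - Λ / μ)
  have hS : HasNeumannDerivs T L S St Sx Sxx := ⟨hScont, hSt, hSx, hSxx, hbcS⟩
  have hE : HasNeumannDerivs T L E Et Ex Exx := ⟨hEcont, hEt, hEx, hExx, hbcE⟩
  have hI : HasNeumannDerivs T L I It Ix Ixx := ⟨hIcont, hIt, hIx, hIxx, hbcI⟩
  have hR : HasNeumannDerivs T L R Rt Rx Rxx := ⟨hRcont, hRt, hRx, hRxx, hbcR⟩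
  have hN := ((hS.add hE).add hI).add hR
  have hV := hN.sub_time (g := fun t => Λ / μ + D * Real.exp (-μ * t))
    (g' := fun t => D * (Real.exp (-μ * t) * -μ)) (by fun_prop) fun t _ =>
      ((((hasDerivAt_id' t).const_mul (-μ)).exp.const_mul D).const_add (Λ / μ)).congr_deriv
        (by ring)
  refine sub_nonpos.mp (hV.nonpos_of_subsolution hμ hlam.le hL ?_ ?_ t ht x hx)
  · intro t ht x hx
    simp only [Pi.add_apply]
    rw [heqS t ht x hx, heqE t ht x hx, heqI t ht x hx, heqR t ht x hx]
    exact le_of_eq (by linear_combination -(mul_div_cancel₀ Λ hμ.ne'))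
  · intro y hy
    have hN₀ : ContinuousOn (fun y => S 0 y + E 0 y + I 0 y + R 0 y) (Icc 0 L) :=
      hN.continuousOn.comp (by fun_prop) fun y hy => mk_mem_prod ⟨le_rfl, ht.1.trans ht.2⟩ hy
    have hD : _ - Λ / μ ≤ D := le_max_right _ _
    simp only [Pi.add_apply, mul_zero, Real.exp_zero, mul_one]
    linarith [hN₀.le_sSup_image_Icc hy]

/-- For a classical solution of the 1D SEIR reaction–diffusion system,
with `D = max 0 (max_y N(0,y) − Λ/μ)`, the total population satisfies
`N(t,x) ≤ Λ/μ + D·e^{−μt}` on `[0,T]×[0,L]`: the excess above the carrying capacity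
`Λ/μ` decays at least at the exponential rate `μ`. -/
theorem seir_classical_solution_exponential_decay_of_excess
    (Λ μ β p δ η γ lam T L : ℝ)
    (hΛ : 0 ≤ Λ) (hμ : 0 < μ) (hβ : 0 ≤ β) (hp0 : 0 ≤ p) (hp1 : p ≤ 1)
    (hδ : 0 ≤ δ) (hη : 0 ≤ η) (hγ : 0 ≤ γ) (hlam : 0 < lam)
    (hT : 0 < T) (hL : 0 < L)
    (S E I R : ℝ → ℝ → ℝ)
    -- partial derivatives: in time (·t), first (·x) and second (·xx) in space
    (St Et It Rt Sx Ex Ix Rx Sxx Exx Ixx Rxx : ℝ → ℝ → ℝ)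
    -- continuity on the closed space-time cylinder [0,T] × [0,L]
    (hScont : ContinuousOn (fun q : ℝ × ℝ => S q.1 q.2) (Set.Icc 0 T ×ˢ Set.Icc 0 L))
    (hEcont : ContinuousOn (fun q : ℝ × ℝ => E q.1 q.2) (Set.Icc 0 T ×ˢ Set.Icc 0 L))
    (hIcont : ContinuousOn (fun q : ℝ × ℝ => I q.1 q.2) (Set.Icc 0 T ×ˢ Set.Icc 0 L))
    (hRcont : ContinuousOn (fun q : ℝ × ℝ => R q.1 q.2) (Set.Icc 0 T ×ˢ Set.Icc 0 L))
    -- time partial derivatives on (0,T] × (0,L)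
    (hSt : ∀ t ∈ Set.Ioc 0 T, ∀ x ∈ Set.Ioo 0 L, HasDerivAt (fun τ => S τ x) (St t x) t)
    (hEt : ∀ t ∈ Set.Ioc 0 T, ∀ x ∈ Set.Ioo 0 L, HasDerivAt (fun τ => E τ x) (Et t x) t)
    (hIt : ∀ t ∈ Set.Ioc 0 T, ∀ x ∈ Set.Ioo 0 L, HasDerivAt (fun τ => I τ x) (It t x) t)
    (hRt : ∀ t ∈ Set.Ioc 0 T, ∀ x ∈ Set.Ioo 0 L, HasDerivAt (fun τ => R τ x) (Rt t x) t)
    -- first spatial partial derivatives on (0,T] × [0,L] (one-sided at the endpoints)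
    (hSx : ∀ t ∈ Set.Ioc 0 T, ∀ x ∈ Set.Icc 0 L,
      HasDerivWithinAt (fun y => S t y) (Sx t x) (Set.Icc 0 L) x)
    (hEx : ∀ t ∈ Set.Ioc 0 T, ∀ x ∈ Set.Icc 0 L,
      HasDerivWithinAt (fun y => E t y) (Ex t x) (Set.Icc 0 L) x)
    (hIx : ∀ t ∈ Set.Ioc 0 T, ∀ x ∈ Set.Icc 0 L,
      HasDerivWithinAt (fun y => I t y) (Ix t x) (Set.Icc 0 L) x)
    (hRx : ∀ t ∈ Set.Ioc 0 T, ∀ x ∈ Set.Icc 0 L,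
      HasDerivWithinAt (fun y => R t y) (Rx t x) (Set.Icc 0 L) x)
    -- second spatial partial derivatives on (0,T] × (0,L)
    (hSxx : ∀ t ∈ Set.Ioc 0 T, ∀ x ∈ Set.Ioo 0 L, HasDerivAt (fun y => Sx t y) (Sxx t x) x)
    (hExx : ∀ t ∈ Set.Ioc 0 T, ∀ x ∈ Set.Ioo 0 L, HasDerivAt (fun y => Ex t y) (Exx t x) x)
    (hIxx : ∀ t ∈ Set.Ioc 0 T, ∀ x ∈ Set.Ioo 0 L, HasDerivAt (fun y => Ix t y) (Ixx t x) x)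
    (hRxx : ∀ t ∈ Set.Ioc 0 T, ∀ x ∈ Set.Ioo 0 L, HasDerivAt (fun y => Rx t y) (Rxx t x) x)
    -- the SEIR reaction–diffusion equations on (0,T] × (0,L)
    (heqS : ∀ t ∈ Set.Ioc 0 T, ∀ x ∈ Set.Ioo 0 L,
      St t x = lam * Sxx t x + Λ - β * S t x * I t x - μ * S t x)
    (heqE : ∀ t ∈ Set.Ioc 0 T, ∀ x ∈ Set.Ioo 0 L,
      Et t x = lam * Exx t x + β * p * S t x * I t x - (δ + η + μ) * E t x)
    (heqI : ∀ t ∈ Set.Ioc 0 T, ∀ x ∈ Set.Ioo 0 L,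
      It t x = lam * Ixx t x + β * (1 - p) * S t x * I t x + δ * E t x - (γ + μ) * I t x)
    (heqR : ∀ t ∈ Set.Ioc 0 T, ∀ x ∈ Set.Ioo 0 L,
      Rt t x = lam * Rxx t x + η * E t x + γ * I t x - μ * R t x)
    -- homogeneous Neumann boundary conditions
    (hbcS : ∀ t ∈ Set.Ioc 0 T, Sx t 0 = 0 ∧ Sx t L = 0)
    (hbcE : ∀ t ∈ Set.Ioc 0 T, Ex t 0 = 0 ∧ Ex t L = 0)
    (hbcI : ∀ t ∈ Set.Ioc 0 T, Ix t 0 = 0 ∧ Ix t L = 0)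
    (hbcR : ∀ t ∈ Set.Ioc 0 T, Rx t 0 = 0 ∧ Rx t L = 0) :
    ∀ t ∈ Set.Icc 0 T, ∀ x ∈ Set.Icc 0 L,
      S t x + E t x + I t x + R t x ≤
        Λ / μ +
          max 0 (sSup ((fun y => S 0 y + E 0 y + I 0 y + R 0 y) '' Set.Icc 0 L) - Λ / μ)
            * Real.exp (-μ * t) :=
  seir_classical_solution_exponential_decay_of_excess_general Λ μ β p δ η γ lam T L hμ hlam hL S E I
    R St Et It Rt Sx Ex Ix Rx Sxx Exx Ixx Rxx hScont hEcont hIcont hRcont hSt hEt hIt hRt hSx hEx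
    hIx hRx hSxx hExx hIxx hRxx heqS heqE heqI heqR hbcS hbcE hbcI hbcR
end

section
/- Let S, E, I, R : ℕ → ℤ → ℝ be defined by the explicit form of the 1D NSFD scheme. If the initial data are nonnegative, i.e. S_j^0 ≥ 0, E_j^0 ≥ 0, I_j^0 ≥ 0, R_j^0 ≥ 0 for all j ∈ ℤ, then for every n ≥ 0 and every j ∈ ℤ one has S_j^n ≥ 0, E_j^n ≥ 0, I_j^n ≥ 0 and R_j^n ≥ 0. This positivity preservation holds unconditionally, for arbitrary step sizes k > 0 and h > 0. -/
/-- The explicit form of the 1D NSFD scheme preserves nonnegativity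
unconditionally: nonnegative initial data yield nonnegative grid functions for all `n`
and `j`, for arbitrary step sizes `k > 0` and `h > 0`. -/
theorem nsfd1d_positivity_preservation
    (Λ μ β p δ η γ lam k φ h r : ℝ)
    (hΛ : 0 ≤ Λ) (hμ : 0 < μ) (hβ : 0 ≤ β) (hp0 : 0 ≤ p) (hp1 : p ≤ 1)
    (hδ : 0 ≤ δ) (hη : 0 ≤ η) (hγ : 0 ≤ γ) (hlam : 0 ≤ lam)
    (hk : 0 < k) (hφ : 0 < φ) (hh : 0 < h) (hr : r = φ / h ^ 2)
    (S E I R : ℕ → ℤ → ℝ)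
    (hS : ∀ n j, S (n + 1) j =
      (S n j + lam * r * (S n (j - 1) + S n (j + 1)) + φ * Λ) /
        (1 + 2 * lam * r + φ * (β * I n j + μ)))
    (hE : ∀ n j, E (n + 1) j =
      (E n j + lam * r * (E n (j - 1) + E n (j + 1)) + φ * β * p * S (n + 1) j * I n j) /
        (1 + 2 * lam * r + φ * (δ + η + μ)))
    (hI : ∀ n j, I (n + 1) j =
      (I n j + lam * r * (I n (j - 1) + I n (j + 1)) +
          φ * (β * (1 - p) * S (n + 1) j * I n j + δ * E (n + 1) j)) /
        (1 + 2 * lam * r + φ * (γ + μ)))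
    (hR : ∀ n j, R (n + 1) j =
      (R n j + lam * r * (R n (j - 1) + R n (j + 1)) +
          φ * (η * E (n + 1) j + γ * I (n + 1) j)) /
        (1 + 2 * lam * r + φ * μ))
    (hS0 : ∀ j, 0 ≤ S 0 j) (hE0 : ∀ j, 0 ≤ E 0 j)
    (hI0 : ∀ j, 0 ≤ I 0 j) (hR0 : ∀ j, 0 ≤ R 0 j) :
    ∀ n j, 0 ≤ S n j ∧ 0 ≤ E n j ∧ 0 ≤ I n j ∧ 0 ≤ R n j := by
  have hr0 : 0 ≤ r := by rw [hr]; positivity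
  have hlr : 0 ≤ lam * r := mul_nonneg hlam hr0
  intro n
  induction n with
  | zero => exact fun j => ⟨hS0 j, hE0 j, hI0 j, hR0 j⟩
  | succ n ih =>
    intro j
    obtain ⟨hSn, hEn, hIn, hRn⟩ := ih j
    obtain ⟨hSl, hEl, hIl, hRl⟩ := ih (j - 1)
    obtain ⟨hSr', hEr, hIr, hRr⟩ := ih (j + 1)
    have hSnext : 0 ≤ S (n + 1) j := by
      rw [hS]
      apply div_nonneg
      · have := mul_nonneg hlr (add_nonneg hSl hSr')
        have := mul_nonneg hφ.le hΛ
        linarith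
      · have : 0 ≤ φ * (β * I n j + μ) :=
          mul_nonneg hφ.le (by positivity)
        linarith
    have hEnext : 0 ≤ E (n + 1) j := by
      rw [hE]
      apply div_nonneg
      · have h1 := mul_nonneg hlr (add_nonneg hEl hEr)
        have h2 : 0 ≤ φ * β * p * S (n + 1) j * I n j := by positivity
        linarith
      · have : 0 ≤ φ * (δ + η + μ) := by positivity
        linarith
    have hInext : 0 ≤ I (n + 1) j := by
      rw [hI]
      apply div_nonneg
      · have h1 := mul_nonneg hlr (add_nonneg hIl hIr)
        have h2 : 0 ≤ φ * (β * (1 - p) * S (n + 1) j * I n j + δ * E (n + 1) j) := by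
          apply mul_nonneg hφ.le
          have hp' : 0 ≤ 1 - p := by linarith
          have := mul_nonneg (mul_nonneg (mul_nonneg hβ hp') hSnext) hIn
          have := mul_nonneg hδ hEnext
          linarith
        linarith
      · have : 0 ≤ φ * (γ + μ) := by positivity
        linarith
    have hRnext : 0 ≤ R (n + 1) j := by
      rw [hR]
      apply div_nonneg
      · have h1 := mul_nonneg hlr (add_nonneg hRl hRr)
        have h2 : 0 ≤ φ * (η * E (n + 1) j + γ * I (n + 1) j) := by
          apply mul_nonneg hφ.le
          have := mul_nonneg hη hEnext
          have := mul_nonneg hγ hInext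
          linarith
        linarith
      · have : 0 ≤ φ * μ := by positivity
        linarith
    exact ⟨hSnext, hEnext, hInext, hRnext⟩
end

section
/- Let N : ℕ → ℤ → ℝ satisfy the 1D discrete total-population recursion. If N_j^0 ≤ Λ/μ for all j ∈ ℤ, then N_j^n ≤ Λ/μ for all n ≥ 0 and all j ∈ ℤ; i.e., the region {N ≤ Λ/μ} is invariant under the 1D NSFD scheme, unconditionally in the step sizes k > 0 and h > 0. -/
/-! The scheme is implicit in the centre value and explicit in the neighbours, so each step writes
`(N' - M)(1 + 2φc + φμ)` as a nonnegative combination of the old deviations `N - M` plus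
`φ(Λ - μM)`, where `c = λ/h²` and `M = Λ/μ`. Nonpositivity of the old deviations therefore
propagates to the new one: a discrete maximum principle with no restriction on the step sizes. -/

theorem le_of_implicit_step {φ c Λ μ M x a b y : ℝ} (hφ : 0 < φ) (hc : 0 ≤ c) (hμ : 0 ≤ μ)
    (hM : Λ ≤ μ * M) (hx : x ≤ M) (ha : a ≤ M) (hb : b ≤ M)
    (hstep : (y - x) / φ = c * (a - 2 * y + b) + Λ - μ * y) : y ≤ M := by
  rw [div_eq_iff hφ.ne'] at hstep
  have hdeviation : (y - M) * (1 + 2 * φ * c + φ * μ) =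
      (x - M) + φ * c * (a - M) + φ * c * (b - M) + φ * (Λ - μ * M) := by
    linear_combination hstep
  have hφc : 0 ≤ φ * c := mul_nonneg hφ.le hc
  have hrhs : (x - M) + φ * c * (a - M) + φ * c * (b - M) + φ * (Λ - μ * M) ≤ 0 := by
    have := mul_nonpos_of_nonneg_of_nonpos hφc (sub_nonpos.2 ha)
    have := mul_nonpos_of_nonneg_of_nonpos hφc (sub_nonpos.2 hb)
    have := mul_nonpos_of_nonneg_of_nonpos hφ.le (sub_nonpos.2 hM)
    linarith
  have hcoeff : 0 < 1 + 2 * φ * c + φ * μ := by positivity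
  exact sub_nonpos.1 (nonpos_of_mul_nonpos_left (hdeviation ▸ hrhs) hcoeff)

theorem nsfd1d_total_population_invariant_region_general
    (Λ μ lam φ h : ℝ)
    (hμ : 0 < μ) (hlam : 0 ≤ lam)
    (hφ : 0 < φ)
    (N : ℕ → ℤ → ℝ)
    (hN : ∀ n j, (N (n + 1) j - N n j) / φ =
      lam * (N n (j + 1) - 2 * N (n + 1) j + N n (j - 1)) / h ^ 2 + Λ - μ * N (n + 1) j)
    (hN0 : ∀ j, N 0 j ≤ Λ / μ) :
    ∀ n j, N n j ≤ Λ / μ := by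
  have hM : Λ ≤ μ * (Λ / μ) := (mul_div_cancel₀ Λ hμ.ne').ge
  intro n
  induction n with
  | zero => exact hN0
  | succ n ih =>
    intro j
    refine le_of_implicit_step hφ (c := lam / h ^ 2) (by positivity) hμ.le hM
      (ih j) (ih (j + 1)) (ih (j - 1)) ?_
    rw [hN, mul_div_right_comm]

/-- The region `{N ≤ Λ/μ}` is invariant under the 1D discrete
total-population recursion, unconditionally in the step sizes `k > 0` and `h > 0`. -/
theorem nsfd1d_total_population_invariant_region
    (Λ μ lam k φ h r : ℝ)
    (hΛ : 0 ≤ Λ) (hμ : 0 < μ) (hlam : 0 ≤ lam)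
    (hk : 0 < k) (hφ : 0 < φ) (hh : 0 < h) (hr : r = φ / h ^ 2)
    (N : ℕ → ℤ → ℝ)
    (hN : ∀ n j, (N (n + 1) j - N n j) / φ =
      lam * (N n (j + 1) - 2 * N (n + 1) j + N n (j - 1)) / h ^ 2 + Λ - μ * N (n + 1) j)
    (hN0 : ∀ j, N 0 j ≤ Λ / μ) :
    ∀ n j, N n j ≤ Λ / μ :=
  nsfd1d_total_population_invariant_region_general Λ μ lam φ h hμ hlam hφ N hN hN0
end

section
/- Let N : ℕ → ℤ → ℝ satisfy the 1D discrete total-population recursion, and suppose the initial deviation is bounded: D := sup_{j∈ℤ} |N_j^0 − Λ/μ| < ∞. Set ρ = (1 + 2λr)/(1 + 2λr + φμ), so that 0 < ρ < 1. Then for all n ≥ 0 and all j ∈ ℤ, |N_j^n − Λ/μ| ≤ ρⁿ·D. In particular N_j^n → Λ/μ as n → ∞, uniformly in j. -/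
/-! The deviation `eⁿ_j = Nⁿ_j − Λ/μ` obeys the homogeneous scheme
`eⁿ⁺¹_j = (eⁿ_j + λr (eⁿ_{j-1} + eⁿ_{j+1})) / (1 + 2λr + φμ)`, whose right-hand side has
nonnegative weights summing to `ρ`. Hence the sup norm of the deviation contracts by the
factor `ρ < 1` at every step. -/

open Filter

theorem Metric.tendstoUniformly_of_dist_le {ι β α : Type*} [PseudoMetricSpace α]
    {F : ι → β → α} {f : β → α} {p : Filter ι} {u : ι → ℝ}
    (hFu : ∀ n x, dist (F n x) (f x) ≤ u n) (hu : Tendsto u p (nhds 0)) :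
    TendstoUniformly F f p := by
  rw [Metric.tendstoUniformly_iff]
  intro ε hε
  filter_upwards [hu.eventually (gt_mem_nhds hε)] with n hn x
  rw [dist_comm]
  exact (hFu n x).trans_lt hn

section ThreePointScheme

variable {a c : ℝ}

theorem abs_threePoint_div_le (ha : 0 ≤ a) (hc : 0 < c) {M : ℝ} (e : ℤ → ℝ)
    (he : ∀ j, |e j| ≤ M) (j : ℤ) :
    |(e j + a * (e (j - 1) + e (j + 1))) / c| ≤ (1 + 2 * a) / c * M := by
  rw [abs_div, abs_of_pos hc, div_mul_eq_mul_div]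
  gcongr
  calc |e j + a * (e (j - 1) + e (j + 1))|
      ≤ |e j| + a * (|e (j - 1)| + |e (j + 1)|) := by
        refine (abs_add_le _ _).trans ?_
        rw [abs_mul, abs_of_nonneg ha]
        gcongr
        exact abs_add_le _ _
    _ ≤ M + a * (M + M) := by gcongr <;> apply he
    _ = (1 + 2 * a) * M := by ring

theorem abs_le_pow_mul_of_threePoint_scheme (ha : 0 ≤ a) (hc : 0 < c) {D : ℝ}
    {e : ℕ → ℤ → ℝ} (he : ∀ n j, e (n + 1) j = (e n j + a * (e n (j - 1) + e n (j + 1))) / c)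
    (h0 : ∀ j, |e 0 j| ≤ D) (n : ℕ) (j : ℤ) :
    |e n j| ≤ ((1 + 2 * a) / c) ^ n * D := by
  induction n generalizing j with
  | zero => simpa using h0 j
  | succ n ih =>
    rw [he, pow_succ', mul_assoc]
    exact abs_threePoint_div_le ha hc (e n) ih j

end ThreePointScheme

theorem nsfd1d_deviation_eq {Λ μ lam φ h r : ℝ} (hμ : 0 < μ) (hφ : 0 < φ) (hlam : 0 ≤ lam)
    (hr : r = φ / h ^ 2) {N : ℕ → ℤ → ℝ}
    (hN : ∀ n j, (N (n + 1) j - N n j) / φ =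
      lam * (N n (j + 1) - 2 * N (n + 1) j + N n (j - 1)) / h ^ 2 + Λ - μ * N (n + 1) j)
    (n : ℕ) (j : ℤ) :
    N (n + 1) j - Λ / μ =
      ((N n j - Λ / μ) + lam * r * ((N n (j - 1) - Λ / μ) + (N n (j + 1) - Λ / μ)))
        / (1 + 2 * (lam * r) + φ * μ) := by
  subst hr
  have hden : 0 < 1 + 2 * (lam * (φ / h ^ 2)) + φ * μ := by positivity
  rw [eq_div_iff hden.ne']
  have hstep := hN n j
  field_simp at hstep ⊢
  linear_combination μ * hstep

theorem nsfd1d_total_population_geometric_convergence_general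
    (Λ μ lam φ h r : ℝ)
    (hμ : 0 < μ) (hlam : 0 ≤ lam)
    (hφ : 0 < φ) (hr : r = φ / h ^ 2)
    (N : ℕ → ℤ → ℝ)
    (hN : ∀ n j, (N (n + 1) j - N n j) / φ =
      lam * (N n (j + 1) - 2 * N (n + 1) j + N n (j - 1)) / h ^ 2 + Λ - μ * N (n + 1) j)
    (hbdd : BddAbove (Set.range fun j : ℤ => |N 0 j - Λ / μ|))
    (D : ℝ) (hD : D = ⨆ j : ℤ, |N 0 j - Λ / μ|)
    (ρ : ℝ) (hρ : ρ = (1 + 2 * lam * r) / (1 + 2 * lam * r + φ * μ)) :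
    (0 < ρ ∧ ρ < 1)
    ∧ (∀ n j, |N n j - Λ / μ| ≤ ρ ^ n * D)
    ∧ TendstoUniformly (fun (n : ℕ) (j : ℤ) => N n j) (fun _ => Λ / μ) Filter.atTop := by
  have hlr : 0 ≤ lam * r := by rw [hr]; positivity
  rw [mul_assoc] at hρ
  have hρ_pos : 0 < ρ := by rw [hρ]; positivity
  have hρ_lt_one : ρ < 1 := by
    rw [hρ, div_lt_one (by positivity)]
    linarith [mul_pos hφ hμ]
  have hgeom : ∀ n j, |N n j - Λ / μ| ≤ ρ ^ n * D := by
    rw [hρ, hD]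
    exact abs_le_pow_mul_of_threePoint_scheme (e := fun n j => N n j - Λ / μ) hlr
      (by positivity) (nsfd1d_deviation_eq hμ hφ hlam hr hN) (le_ciSup hbdd)
  refine ⟨⟨hρ_pos, hρ_lt_one⟩, hgeom, Metric.tendstoUniformly_of_dist_le hgeom ?_⟩
  simpa using (tendsto_pow_atTop_nhds_zero_of_lt_one hρ_pos.le hρ_lt_one).mul_const D

/-- For the 1D discrete total-population recursion with bounded initial
deviation `D = sup_j |N⁰_j − Λ/μ|` and `ρ = (1 + 2λr)/(1 + 2λr + φμ)`, one has
`0 < ρ < 1` and `|Nⁿ_j − Λ/μ| ≤ ρⁿ·D` for all `n, j`; in particular `Nⁿ_j → Λ/μ`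
uniformly in `j`. -/
theorem nsfd1d_total_population_geometric_convergence
    (Λ μ lam k φ h r : ℝ)
    (hΛ : 0 ≤ Λ) (hμ : 0 < μ) (hlam : 0 ≤ lam)
    (hk : 0 < k) (hφ : 0 < φ) (hh : 0 < h) (hr : r = φ / h ^ 2)
    (N : ℕ → ℤ → ℝ)
    (hN : ∀ n j, (N (n + 1) j - N n j) / φ =
      lam * (N n (j + 1) - 2 * N (n + 1) j + N n (j - 1)) / h ^ 2 + Λ - μ * N (n + 1) j)
    (hbdd : BddAbove (Set.range fun j : ℤ => |N 0 j - Λ / μ|))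
    (D : ℝ) (hD : D = ⨆ j : ℤ, |N 0 j - Λ / μ|)
    (ρ : ℝ) (hρ : ρ = (1 + 2 * lam * r) / (1 + 2 * lam * r + φ * μ)) :
    (0 < ρ ∧ ρ < 1)
    ∧ (∀ n j, |N n j - Λ / μ| ≤ ρ ^ n * D)
    ∧ TendstoUniformly (fun (n : ℕ) (j : ℤ) => N n j) (fun _ => Λ / μ) Filter.atTop :=
  nsfd1d_total_population_geometric_convergence_general Λ μ lam φ h r hμ hlam hφ hr N hN hbdd D hD ρ
    hρ
end

section
/- Let S, E, I, R : ℕ → ℤ → ℝ be defined by the explicit form of the 1D NSFD scheme, with nonnegative initial data S_j^0, E_j^0, I_j^0, R_j^0 ≥ 0 satisfying S_j^0 + E_j^0 + I_j^0 + R_j^0 ≤ Λ/μ for all j ∈ ℤ. Then for all n ≥ 0 and all j ∈ ℤ, each compartment satisfies 0 ≤ S_j^n ≤ Λ/μ, 0 ≤ E_j^n ≤ Λ/μ, 0 ≤ I_j^n ≤ Λ/μ and 0 ≤ R_j^n ≤ Λ/μ; i.e., the discrete solution remains uniformly bounded by the carrying capacity Λ/μ without any restriction on the step sizes k and h. -/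
/-- For the explicit 1D NSFD scheme with nonnegative initial data whose
total `S⁰ + E⁰ + I⁰ + R⁰` is bounded by `Λ/μ`, every compartment stays in `[0, Λ/μ]`
for all `n` and `j`, without any restriction on the step sizes `k` and `h`. -/
theorem nsfd1d_uniform_boundedness
    (Λ μ β p δ η γ lam k φ h r : ℝ)
    (hΛ : 0 ≤ Λ) (hμ : 0 < μ) (hβ : 0 ≤ β) (hp0 : 0 ≤ p) (hp1 : p ≤ 1)
    (hδ : 0 ≤ δ) (hη : 0 ≤ η) (hγ : 0 ≤ γ) (hlam : 0 ≤ lam)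
    (hk : 0 < k) (hφ : 0 < φ) (hh : 0 < h) (hr : r = φ / h ^ 2)
    (S E I R : ℕ → ℤ → ℝ)
    (hS : ∀ n j, S (n + 1) j =
      (S n j + lam * r * (S n (j - 1) + S n (j + 1)) + φ * Λ) /
        (1 + 2 * lam * r + φ * (β * I n j + μ)))
    (hE : ∀ n j, E (n + 1) j =
      (E n j + lam * r * (E n (j - 1) + E n (j + 1)) + φ * β * p * S (n + 1) j * I n j) /
        (1 + 2 * lam * r + φ * (δ + η + μ)))
    (hI : ∀ n j, I (n + 1) j =
      (I n j + lam * r * (I n (j - 1) + I n (j + 1)) +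
          φ * (β * (1 - p) * S (n + 1) j * I n j + δ * E (n + 1) j)) /
        (1 + 2 * lam * r + φ * (γ + μ)))
    (hR : ∀ n j, R (n + 1) j =
      (R n j + lam * r * (R n (j - 1) + R n (j + 1)) +
          φ * (η * E (n + 1) j + γ * I (n + 1) j)) /
        (1 + 2 * lam * r + φ * μ))
    (hS0 : ∀ j, 0 ≤ S 0 j) (hE0 : ∀ j, 0 ≤ E 0 j)
    (hI0 : ∀ j, 0 ≤ I 0 j) (hR0 : ∀ j, 0 ≤ R 0 j)
    (hN0 : ∀ j, S 0 j + E 0 j + I 0 j + R 0 j ≤ Λ / μ) :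
    ∀ n j, (0 ≤ S n j ∧ S n j ≤ Λ / μ) ∧ (0 ≤ E n j ∧ E n j ≤ Λ / μ) ∧
      (0 ≤ I n j ∧ I n j ≤ Λ / μ) ∧ (0 ≤ R n j ∧ R n j ≤ Λ / μ) := by
  have hM : μ * (Λ / μ) = Λ := by field_simp
  have hr0 : 0 ≤ r := by rw [hr]; positivity
  have ha : 0 ≤ lam * r := mul_nonneg hlam hr0
  have main : ∀ n j, 0 ≤ S n j ∧ 0 ≤ E n j ∧ 0 ≤ I n j ∧ 0 ≤ R n j ∧
      S n j + E n j + I n j + R n j ≤ Λ / μ := by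
    intro n
    induction n with
    | zero => exact fun j => ⟨hS0 j, hE0 j, hI0 j, hR0 j, hN0 j⟩
    | succ n ih =>
      intro j
      obtain ⟨hSc, hEc, hIc, hRc, hNc⟩ := ih j
      obtain ⟨hSl, hEl, hIl, hRl, hNl⟩ := ih (j - 1)
      obtain ⟨hSr, hEr, hIr, hRr, hNr⟩ := ih (j + 1)
      have hbi : 0 ≤ β * I n j := mul_nonneg hβ hIc
      have hdS : 0 < 1 + 2 * lam * r + φ * (β * I n j + μ) := by
        have := mul_pos hφ (show (0:ℝ) < β * I n j + μ by linarith)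
        linarith
      have hdE : 0 < 1 + 2 * lam * r + φ * (δ + η + μ) := by
        have := mul_pos hφ (show (0:ℝ) < δ + η + μ by linarith)
        linarith
      have hdI : 0 < 1 + 2 * lam * r + φ * (γ + μ) := by
        have := mul_pos hφ (show (0:ℝ) < γ + μ by linarith)
        linarith
      have hdR : 0 < 1 + 2 * lam * r + φ * μ := by
        have := mul_pos hφ hμ
        linarith
      have hS1 : 0 ≤ S (n + 1) j := by
        rw [hS]
        apply div_nonneg _ hdS.le
        have h1 : 0 ≤ lam * r * (S n (j - 1) + S n (j + 1)) :=
          mul_nonneg ha (by linarith)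
        have h2 : 0 ≤ φ * Λ := mul_nonneg hφ.le hΛ
        linarith
      have hE1 : 0 ≤ E (n + 1) j := by
        rw [hE]
        apply div_nonneg _ hdE.le
        have h1 : 0 ≤ lam * r * (E n (j - 1) + E n (j + 1)) :=
          mul_nonneg ha (by linarith)
        have h2 : 0 ≤ φ * β * p * S (n + 1) j * I n j :=
          mul_nonneg (mul_nonneg (mul_nonneg (mul_nonneg hφ.le hβ) hp0) hS1) hIc
        linarith
      have hI1 : 0 ≤ I (n + 1) j := by
        rw [hI]
        apply div_nonneg _ hdI.le
        have h1 : 0 ≤ lam * r * (I n (j - 1) + I n (j + 1)) :=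
          mul_nonneg ha (by linarith)
        have h2 : 0 ≤ φ * (β * (1 - p) * S (n + 1) j * I n j + δ * E (n + 1) j) := by
          apply mul_nonneg hφ.le
          have h3 : 0 ≤ β * (1 - p) * S (n + 1) j * I n j :=
            mul_nonneg (mul_nonneg (mul_nonneg hβ (by linarith)) hS1) hIc
          have h4 : 0 ≤ δ * E (n + 1) j := mul_nonneg hδ hE1
          linarith
        linarith
      have hR1 : 0 ≤ R (n + 1) j := by
        rw [hR]
        apply div_nonneg _ hdR.le
        have h1 : 0 ≤ lam * r * (R n (j - 1) + R n (j + 1)) :=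
          mul_nonneg ha (by linarith)
        have h2 : 0 ≤ φ * (η * E (n + 1) j + γ * I (n + 1) j) :=
          mul_nonneg hφ.le (by
            have := mul_nonneg hη hE1
            have := mul_nonneg hγ hI1
            linarith)
        linarith
      have eS : S (n + 1) j * (1 + 2 * lam * r + φ * (β * I n j + μ)) =
          S n j + lam * r * (S n (j - 1) + S n (j + 1)) + φ * Λ := by
        rw [hS, div_mul_cancel₀ _ hdS.ne']
      have eE : E (n + 1) j * (1 + 2 * lam * r + φ * (δ + η + μ)) =
          E n j + lam * r * (E n (j - 1) + E n (j + 1)) +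
            φ * β * p * S (n + 1) j * I n j := by
        rw [hE, div_mul_cancel₀ _ hdE.ne']
      have eI : I (n + 1) j * (1 + 2 * lam * r + φ * (γ + μ)) =
          I n j + lam * r * (I n (j - 1) + I n (j + 1)) +
            φ * (β * (1 - p) * S (n + 1) j * I n j + δ * E (n + 1) j) := by
        rw [hI, div_mul_cancel₀ _ hdI.ne']
      have eR : R (n + 1) j * (1 + 2 * lam * r + φ * μ) =
          R n j + lam * r * (R n (j - 1) + R n (j + 1)) +
            φ * (η * E (n + 1) j + γ * I (n + 1) j) := by
        rw [hR, div_mul_cancel₀ _ hdR.ne']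
      have key : (S (n + 1) j + E (n + 1) j + I (n + 1) j + R (n + 1) j) *
          (1 + 2 * lam * r + φ * μ) =
          (S n j + E n j + I n j + R n j) +
            lam * r * ((S n (j - 1) + E n (j - 1) + I n (j - 1) + R n (j - 1)) +
              (S n (j + 1) + E n (j + 1) + I n (j + 1) + R n (j + 1))) + φ * Λ := by
        linear_combination eS + eE + eI + eR
      have hsum : S (n + 1) j + E (n + 1) j + I (n + 1) j + R (n + 1) j ≤ Λ / μ := by
        have h1 : lam * r * ((S n (j - 1) + E n (j - 1) + I n (j - 1) + R n (j - 1)) +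
            (S n (j + 1) + E n (j + 1) + I n (j + 1) + R n (j + 1))) ≤
            lam * r * (Λ / μ + Λ / μ) :=
          mul_le_mul_of_nonneg_left (by linarith) ha
        have h2 : φ * Λ = φ * μ * (Λ / μ) := by rw [mul_assoc, hM]
        have hnum : (S (n + 1) j + E (n + 1) j + I (n + 1) j + R (n + 1) j) *
            (1 + 2 * lam * r + φ * μ) ≤ (Λ / μ) * (1 + 2 * lam * r + φ * μ) := by
          rw [key]
          have h3 : (Λ / μ) * (1 + 2 * lam * r + φ * μ) =
              Λ / μ + lam * r * (Λ / μ + Λ / μ) + φ * μ * (Λ / μ) := by ring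
          linarith
        exact le_of_mul_le_mul_right hnum hdR
      exact ⟨hS1, hE1, hI1, hR1, hsum⟩
  intro n j
  obtain ⟨h1, h2, h3, h4, h5⟩ := main n j
  exact ⟨⟨h1, by linarith⟩, ⟨h2, by linarith⟩, ⟨h3, by linarith⟩, ⟨h4, by linarith⟩⟩
end

section
/- Let S, E, I, R : ℕ → ℤ² → ℝ be defined by the explicit form of the 2D NSFD scheme. If the initial data are nonnegative, i.e. S_{j,ℓ}^0 ≥ 0, E_{j,ℓ}^0 ≥ 0, I_{j,ℓ}^0 ≥ 0, R_{j,ℓ}^0 ≥ 0 for all (j,ℓ) ∈ ℤ², then for every n ≥ 0 and every (j,ℓ) ∈ ℤ² one has S_{j,ℓ}^n ≥ 0, E_{j,ℓ}^n ≥ 0, I_{j,ℓ}^n ≥ 0 and R_{j,ℓ}^n ≥ 0. This positivity preservation holds unconditionally, for arbitrary step sizes k > 0 and h > 0. -/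
/-- The explicit form of the 2D NSFD scheme preserves nonnegativity
unconditionally: nonnegative initial data yield nonnegative grid functions for all `n`
and `(j,ℓ)`, for arbitrary step sizes `k > 0` and `h > 0`. -/
theorem nsfd2d_positivity_preservation
    (Λ μ β p δ η γ lam k φ h r : ℝ)
    (hΛ : 0 ≤ Λ) (hμ : 0 < μ) (hβ : 0 ≤ β) (hp0 : 0 ≤ p) (hp1 : p ≤ 1)
    (hδ : 0 ≤ δ) (hη : 0 ≤ η) (hγ : 0 ≤ γ) (hlam : 0 ≤ lam)
    (hk : 0 < k) (hφ : 0 < φ) (hh : 0 < h) (hr : r = φ / h ^ 2)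
    (S E I R : ℕ → ℤ → ℤ → ℝ)
    (hS : ∀ n j l, S (n + 1) j l =
      (S n j l + lam * r * (S n (j + 1) l + S n (j - 1) l + S n j (l + 1) + S n j (l - 1))
          + φ * Λ) /
        (1 + 4 * lam * r + φ * (β * I n j l + μ)))
    (hE : ∀ n j l, E (n + 1) j l =
      (E n j l + lam * r * (E n (j + 1) l + E n (j - 1) l + E n j (l + 1) + E n j (l - 1))
          + φ * β * p * S (n + 1) j l * I n j l) /
        (1 + 4 * lam * r + φ * (δ + η + μ)))
    (hI : ∀ n j l, I (n + 1) j l =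
      (I n j l + lam * r * (I n (j + 1) l + I n (j - 1) l + I n j (l + 1) + I n j (l - 1))
          + φ * (β * (1 - p) * S (n + 1) j l * I n j l + δ * E (n + 1) j l)) /
        (1 + 4 * lam * r + φ * (γ + μ)))
    (hR : ∀ n j l, R (n + 1) j l =
      (R n j l + lam * r * (R n (j + 1) l + R n (j - 1) l + R n j (l + 1) + R n j (l - 1))
          + φ * (η * E (n + 1) j l + γ * I (n + 1) j l)) /
        (1 + 4 * lam * r + φ * μ))
    (hS0 : ∀ j l, 0 ≤ S 0 j l) (hE0 : ∀ j l, 0 ≤ E 0 j l)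
    (hI0 : ∀ j l, 0 ≤ I 0 j l) (hR0 : ∀ j l, 0 ≤ R 0 j l) :
    ∀ n j l, 0 ≤ S n j l ∧ 0 ≤ E n j l ∧ 0 ≤ I n j l ∧ 0 ≤ R n j l := by

  have hr0 : 0 ≤ r := by rw [hr]; positivity
  have hlr : 0 ≤ lam * r := mul_nonneg hlam hr0
  intro n
  induction n with
  | zero => exact fun j l => ⟨hS0 j l, hE0 j l, hI0 j l, hR0 j l⟩
  | succ n ih =>
    intro j l
    obtain ⟨hSn, hEn, hIn, hRn⟩ := ih j l
    have hSp := fun j l => (ih j l).1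
    have hEp := fun j l => (ih j l).2.1
    have hIp := fun j l => (ih j l).2.2.1
    have hRp := fun j l => (ih j l).2.2.2
    have hS1 : 0 ≤ S (n + 1) j l := by
      rw [hS]
      apply div_nonneg
      · have := hSp (j+1) l; have := hSp (j-1) l; have := hSp j (l+1); have := hSp j (l-1)
        positivity
      · have := hIp j l
        positivity
    have hE1 : 0 ≤ E (n + 1) j l := by
      rw [hE]
      apply div_nonneg
      · have := hIp j l
        have := hEp (j+1) l; have := hEp (j-1) l; have := hEp j (l+1); have := hEp j (l-1)
        positivity
      · positivity
    have hI1 : 0 ≤ I (n + 1) j l := by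
      rw [hI]
      apply div_nonneg
      · have h1p : 0 ≤ 1 - p := by linarith
        have := hIp j l
        have := hIp (j+1) l; have := hIp (j-1) l; have := hIp j (l+1); have := hIp j (l-1)
        positivity
      · positivity
    have hR1 : 0 ≤ R (n + 1) j l := by
      rw [hR]
      apply div_nonneg
      · have := hRp (j+1) l; have := hRp (j-1) l; have := hRp j (l+1); have := hRp j (l-1)
        positivity
      · positivity
    exact ⟨hS1, hE1, hI1, hR1⟩
end

section
/- Let N : ℕ → ℤ² → ℝ satisfy the 2D discrete total-population recursion. If N_{j,ℓ}^0 ≤ Λ/μ for all (j,ℓ) ∈ ℤ², then N_{j,ℓ}^n ≤ Λ/μ for all n ≥ 0 and all (j,ℓ) ∈ ℤ²; i.e., the region {N ≤ Λ/μ} is invariant under the 2D NSFD scheme, unconditionally in the step sizes k > 0 and h > 0. -/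
/-! Clearing the denominator `φ` of one implicit step gives
`(1 + φ c m + φ μ) (x' - K) = (x - K) + φ c (s - m K)` with `K = Λ / μ`, where `x` is the old
value, `x'` the new one and `s` the sum of the `m` old neighbour values. The coefficient on the
left is positive and the right-hand side is nonpositive once all old values are at most `K`, so
the bound `N ≤ Λ / μ` propagates from one time level to the next without any step-size
restriction. -/

theorem implicit_step_le_div {φ c m μ Λ x x' s : ℝ} (hφ : 0 < φ) (hc : 0 ≤ c) (hm : 0 ≤ m)
    (hμ : 0 < μ) (hstep : (x' - x) / φ = c * (s - m * x') + Λ - μ * x')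
    (hx : x ≤ Λ / μ) (hs : s ≤ m * (Λ / μ)) : x' ≤ Λ / μ := by
  set K := Λ / μ with hK
  have hΛ : Λ = μ * K := by rw [hK, mul_div_cancel₀ _ hμ.ne']
  have hidentity : (1 + φ * c * m + φ * μ) * (x' - K) = (x - K) + φ * c * (s - m * K) := by
    rw [div_eq_iff hφ.ne', hΛ] at hstep
    linear_combination hstep
  have hcoeff : 0 < 1 + φ * c * m + φ * μ := by positivity
  have hrhs : (x - K) + φ * c * (s - m * K) ≤ 0 := by
    have : 0 ≤ φ * c := by positivity
    nlinarith
  have : x' - K ≤ 0 := nonpos_of_mul_nonpos_right (hidentity ▸ hrhs) hcoeff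
  linarith

theorem nsfd2d_total_population_invariant_region_general
    (Λ μ lam φ h : ℝ)
    (hμ : 0 < μ) (hlam : 0 ≤ lam)
    (hφ : 0 < φ)
    (N : ℕ → ℤ → ℤ → ℝ)
    (hN : ∀ n j l, (N (n + 1) j l - N n j l) / φ =
      lam * (N n (j + 1) l + N n (j - 1) l + N n j (l + 1) + N n j (l - 1)
          - 4 * N (n + 1) j l) / h ^ 2 + Λ - μ * N (n + 1) j l)
    (hN0 : ∀ j l, N 0 j l ≤ Λ / μ) :
    ∀ n j l, N n j l ≤ Λ / μ := by
  intro n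
  induction n with
  | zero => exact hN0
  | succ n ih =>
    intro j l
    have hstep := hN n j l
    rw [mul_div_right_comm] at hstep
    refine implicit_step_le_div hφ (by positivity) zero_le_four hμ hstep (ih j l) ?_
    linarith [ih (j + 1) l, ih (j - 1) l, ih j (l + 1), ih j (l - 1)]

/-- The region `{N ≤ Λ/μ}` is invariant under the 2D discrete
total-population recursion, unconditionally in the step sizes `k > 0` and `h > 0`. -/
theorem nsfd2d_total_population_invariant_region
    (Λ μ lam k φ h r : ℝ)
    (hΛ : 0 ≤ Λ) (hμ : 0 < μ) (hlam : 0 ≤ lam)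
    (hk : 0 < k) (hφ : 0 < φ) (hh : 0 < h) (hr : r = φ / h ^ 2)
    (N : ℕ → ℤ → ℤ → ℝ)
    (hN : ∀ n j l, (N (n + 1) j l - N n j l) / φ =
      lam * (N n (j + 1) l + N n (j - 1) l + N n j (l + 1) + N n j (l - 1)
          - 4 * N (n + 1) j l) / h ^ 2 + Λ - μ * N (n + 1) j l)
    (hN0 : ∀ j l, N 0 j l ≤ Λ / μ) :
    ∀ n j l, N n j l ≤ Λ / μ :=
  nsfd2d_total_population_invariant_region_general Λ μ lam φ h hμ hlam hφ N hN hN0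
end

section
/- Let N : ℕ → ℤ² → ℝ satisfy the 2D discrete total-population recursion, and suppose the initial deviation is bounded: D := sup_{(j,ℓ)∈ℤ²} |N_{j,ℓ}^0 − Λ/μ| < ∞. Set ρ = (1 + 4λr)/(1 + 4λr + φμ), so that 0 < ρ < 1. Then for all n ≥ 0 and all (j,ℓ) ∈ ℤ², |N_{j,ℓ}^n − Λ/μ| ≤ ρⁿ·D. In particular N_{j,ℓ}^n → Λ/μ as n → ∞, uniformly in (j,ℓ). -/
/-!
Writing `eₙ = Nⁿ − Λ/μ` (the constant `Λ/μ` is a fixed point of the scheme), the recursion becomes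
`(1 + 4λr + φμ) eₙ₊₁(j,ℓ) = eₙ(j,ℓ) + λr · (sum of eₙ over the four neighbours of (j,ℓ))`.
The right-hand side has nonnegative coefficients summing to `1 + 4λr`, so the sup norm of the
error contracts by the factor `ρ` at every step.
-/

open Filter Topology

theorem tendstoUniformly_of_dist_le {ι α β : Type*} [PseudoMetricSpace β] {l : Filter ι}
    {f : ι → α → β} {g : α → β} {b : ι → ℝ} (hb : Tendsto b l (𝓝 0))
    (h : ∀ i a, dist (g a) (f i a) ≤ b i) : TendstoUniformly f g l := by
  rw [Metric.tendstoUniformly_iff]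
  intro ε hε
  filter_upwards [hb.eventually (gt_mem_nhds hε)] with i hi a
  exact (h i a).trans_lt hi

theorem abs_le_pow_mul_of_contraction {α : Type*} {e : ℕ → α → ℝ} {ρ D : ℝ}
    (h0 : ∀ a, |e 0 a| ≤ D)
    (hstep : ∀ n M, (∀ a, |e n a| ≤ M) → ∀ a, |e (n + 1) a| ≤ ρ * M) :
    ∀ n a, |e n a| ≤ ρ ^ n * D := by
  intro n
  induction n with
  | zero => simpa using h0
  | succ n ih => simpa only [pow_succ', mul_assoc] using hstep n _ ih

theorem abs_le_of_mul_eq_add_mul_sum_four {x y₁ y₂ y₃ y₄ z c d M : ℝ} (hc : 0 ≤ c)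
    (hd : 0 < 1 + 4 * c + d) (hz : (1 + 4 * c + d) * z = x + c * (y₁ + y₂ + y₃ + y₄))
    (hx : |x| ≤ M) (h₁ : |y₁| ≤ M) (h₂ : |y₂| ≤ M) (h₃ : |y₃| ≤ M) (h₄ : |y₄| ≤ M) :
    |z| ≤ (1 + 4 * c) / (1 + 4 * c + d) * M := by
  have hsum : |y₁ + y₂ + y₃ + y₄| ≤ 4 * M := by
    calc |y₁ + y₂ + y₃ + y₄| ≤ |y₁ + y₂ + y₃| + |y₄| := abs_add_le _ _
      _ ≤ |y₁| + |y₂| + |y₃| + |y₄| := by gcongr; exact abs_add_three y₁ y₂ y₃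
      _ ≤ 4 * M := by linarith
  have hrhs : |x + c * (y₁ + y₂ + y₃ + y₄)| ≤ (1 + 4 * c) * M := by
    calc |x + c * (y₁ + y₂ + y₃ + y₄)| ≤ |x| + c * |y₁ + y₂ + y₃ + y₄| := by
          simpa only [abs_mul, abs_of_nonneg hc] using abs_add_le x (c * (y₁ + y₂ + y₃ + y₄))
      _ ≤ M + c * (4 * M) := by gcongr
      _ = (1 + 4 * c) * M := by ring
  rw [div_mul_eq_mul_div, le_div_iff₀ hd, mul_comm, ← abs_of_pos hd, ← abs_mul, hz]
  exact hrhs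

theorem nsfd2d_error_step {Λ μ lam φ h r : ℝ} (hμ : 0 < μ) (hφ : 0 < φ) (hr : r = φ / h ^ 2)
    {N : ℕ → ℤ → ℤ → ℝ} {n : ℕ} {j l : ℤ}
    (hN : (N (n + 1) j l - N n j l) / φ =
      lam * (N n (j + 1) l + N n (j - 1) l + N n j (l + 1) + N n j (l - 1)
          - 4 * N (n + 1) j l) / h ^ 2 + Λ - μ * N (n + 1) j l) :
    (1 + 4 * lam * r + φ * μ) * (N (n + 1) j l - Λ / μ) =
      (N n j l - Λ / μ) + lam * r * ((N n (j + 1) l - Λ / μ) + (N n (j - 1) l - Λ / μ)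
        + (N n j (l + 1) - Λ / μ) + (N n j (l - 1) - Λ / μ)) := by
  -- `1 / h ^ 2 = r / φ` holds even for `h = 0`, both sides being `0` then.
  have hh : ∀ X, lam * X / h ^ 2 = lam * r * X / φ := by
    intro X
    rw [hr]
    field_simp
  rw [hh] at hN
  field_simp at hN ⊢
  linear_combination μ * hN

theorem nsfd2d_total_population_geometric_convergence_general
    (Λ μ lam φ h r : ℝ)
    (hμ : 0 < μ) (hlam : 0 ≤ lam)
    (hφ : 0 < φ) (hr : r = φ / h ^ 2)
    (N : ℕ → ℤ → ℤ → ℝ)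
    (hN : ∀ n j l, (N (n + 1) j l - N n j l) / φ =
      lam * (N n (j + 1) l + N n (j - 1) l + N n j (l + 1) + N n j (l - 1)
          - 4 * N (n + 1) j l) / h ^ 2 + Λ - μ * N (n + 1) j l)
    (hbdd : BddAbove (Set.range fun jl : ℤ × ℤ => |N 0 jl.1 jl.2 - Λ / μ|))
    (D : ℝ) (hD : D = ⨆ jl : ℤ × ℤ, |N 0 jl.1 jl.2 - Λ / μ|)
    (ρ : ℝ) (hρ : ρ = (1 + 4 * lam * r) / (1 + 4 * lam * r + φ * μ)) :
    (0 < ρ ∧ ρ < 1)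
    ∧ (∀ n j l, |N n j l - Λ / μ| ≤ ρ ^ n * D)
    ∧ TendstoUniformly (fun (n : ℕ) (jl : ℤ × ℤ) => N n jl.1 jl.2) (fun _ => Λ / μ)
        Filter.atTop := by
  have hlr : 0 ≤ lam * r := mul_nonneg hlam (by rw [hr]; positivity)
  have hφμ : 0 < φ * μ := mul_pos hφ hμ
  have hden : 0 < 1 + 4 * (lam * r) + φ * μ := by linarith
  have hρ₀ : 0 < ρ := by rw [hρ]; exact div_pos (by linarith) (by linarith)
  have hρ₁ : ρ < 1 := by rw [hρ, div_lt_one (by linarith)]; linarith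
  have hbound : ∀ n (jl : ℤ × ℤ), |N n jl.1 jl.2 - Λ / μ| ≤ ρ ^ n * D := by
    refine abs_le_pow_mul_of_contraction (fun jl => hD ▸ le_ciSup hbdd jl) ?_
    rintro n M hM ⟨j, l⟩
    rw [hρ, mul_assoc 4 lam r]
    refine abs_le_of_mul_eq_add_mul_sum_four hlr hden ?_ (hM (j, l))
      (hM (j + 1, l)) (hM (j - 1, l)) (hM (j, l + 1)) (hM (j, l - 1))
    simpa only [mul_assoc] using nsfd2d_error_step hμ hφ hr (hN n j l)
  have hlim : Tendsto (fun n : ℕ => ρ ^ n * D) atTop (𝓝 0) := by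
    simpa using (tendsto_pow_atTop_nhds_zero_of_lt_one hρ₀.le hρ₁).mul_const D
  refine ⟨⟨hρ₀, hρ₁⟩, fun n j l => hbound n (j, l), tendstoUniformly_of_dist_le hlim ?_⟩
  intro n jl
  simpa only [Real.dist_eq, abs_sub_comm] using hbound n jl

/-- For the 2D discrete total-population recursion with bounded initial
deviation `D = sup_{(j,ℓ)} |N⁰_{j,ℓ} − Λ/μ|` and `ρ = (1 + 4λr)/(1 + 4λr + φμ)`, one has
`0 < ρ < 1` and `|Nⁿ_{j,ℓ} − Λ/μ| ≤ ρⁿ·D`; in particular `Nⁿ_{j,ℓ} → Λ/μ` uniformly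
in `(j,ℓ)`. -/
theorem nsfd2d_total_population_geometric_convergence
    (Λ μ lam k φ h r : ℝ)
    (hΛ : 0 ≤ Λ) (hμ : 0 < μ) (hlam : 0 ≤ lam)
    (hk : 0 < k) (hφ : 0 < φ) (hh : 0 < h) (hr : r = φ / h ^ 2)
    (N : ℕ → ℤ → ℤ → ℝ)
    (hN : ∀ n j l, (N (n + 1) j l - N n j l) / φ =
      lam * (N n (j + 1) l + N n (j - 1) l + N n j (l + 1) + N n j (l - 1)
          - 4 * N (n + 1) j l) / h ^ 2 + Λ - μ * N (n + 1) j l)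
    (hbdd : BddAbove (Set.range fun jl : ℤ × ℤ => |N 0 jl.1 jl.2 - Λ / μ|))
    (D : ℝ) (hD : D = ⨆ jl : ℤ × ℤ, |N 0 jl.1 jl.2 - Λ / μ|)
    (ρ : ℝ) (hρ : ρ = (1 + 4 * lam * r) / (1 + 4 * lam * r + φ * μ)) :
    (0 < ρ ∧ ρ < 1)
    ∧ (∀ n j l, |N n j l - Λ / μ| ≤ ρ ^ n * D)
    ∧ TendstoUniformly (fun (n : ℕ) (jl : ℤ × ℤ) => N n jl.1 jl.2) (fun _ => Λ / μ)
        Filter.atTop :=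
  nsfd2d_total_population_geometric_convergence_general Λ μ lam φ h r hμ hlam hφ hr N hN hbdd D hD ρ
    hρ
end
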